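/- arXiv:2001.00864 — 7 statements merged into one kernel-verified Lean document; each statement's English description precedes it below -/
import Mathlib

section
/- Discrete-time Mayer reconstruction: let X be a finite set, φ : X ⇝ X a set-valued surjection with nonempty values, T ∈ ℕ. Define one-step operators on functions g : X → ℝ by F₁(g)(j) = min{g(i) : j ∈ φ(i)} and B₁(g)(i) = max{g(j) : j ∈ φ(i)}. Then for every g : X → ℝ, B₁^T(F₁^T(B₁^T(g))) = B₁^T(g). In particular, any initial function of the form g₀ = B₁^T(g) is reconstructible in T steps: g₀ = B₁^T(F₁^T(g₀)). -/
open Set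

/-- One-step forward operator: `F₁(g)(j) = min{g(i) : j ∈ φ(i)}`. -/
noncomputable def F1 {X : Type*} (φ : X → Set X) (g : X → ℝ) : X → ℝ :=
  fun j => sInf {r : ℝ | ∃ i, j ∈ φ i ∧ r = g i}

/-- One-step backward operator: `B₁(g)(i) = max{g(j) : j ∈ φ(i)}`. -/
noncomputable def B1 {X : Type*} (φ : X → Set X) (g : X → ℝ) : X → ℝ :=
  fun i => sSup (g '' φ i)

section aux

variable {X : Type*} [Fintype X] (φ : X → Set X)

lemma F1_set_eq (g : X → ℝ) (j : X) :
    {r : ℝ | ∃ i, j ∈ φ i ∧ r = g i} = g '' {i | j ∈ φ i} := by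
  ext r; simp [eq_comm, and_comm]

lemma B1_mono (g h : X → ℝ) (hne : ∀ i, (φ i).Nonempty) (hgh : g ≤ h) :
    B1 φ g ≤ B1 φ h := by
  intro i
  apply csSup_le (((hne i).image g))
  rintro r ⟨j, hj, rfl⟩
  exact le_csSup ((Set.toFinite (φ i)).image h).bddAbove ⟨j, hj, rfl⟩ |>.trans' (hgh j)

lemma F1_mono (g h : X → ℝ) (hsurj : ∀ j : X, ∃ i, j ∈ φ i) (hgh : g ≤ h) :
    F1 φ g ≤ F1 φ h := by
  intro j
  unfold F1
  rw [F1_set_eq, F1_set_eq]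
  apply le_csInf
  · obtain ⟨i, hi⟩ := hsurj j
    exact ⟨h i, i, hi, rfl⟩
  rintro r ⟨i, hi, rfl⟩
  exact (csInf_le ((Set.toFinite _).image g).bddBelow ⟨i, hi, rfl⟩).trans (hgh i)

lemma B1F1_le (h : X → ℝ) (hne : ∀ i, (φ i).Nonempty) : B1 φ (F1 φ h) ≤ h := by
  intro i
  apply csSup_le ((hne i).image _)
  rintro r ⟨j, hj, rfl⟩
  rw [F1, F1_set_eq]
  exact csInf_le ((Set.toFinite _).image h).bddBelow ⟨i, hj, rfl⟩

lemma le_F1B1 (g : X → ℝ) (hsurj : ∀ j : X, ∃ i, j ∈ φ i) : g ≤ F1 φ (B1 φ g) := by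
  intro j
  rw [F1, F1_set_eq]
  apply le_csInf
  · obtain ⟨i, hi⟩ := hsurj j
    exact ⟨B1 φ g i, i, hi, rfl⟩
  rintro r ⟨i, hi, rfl⟩
  exact le_csSup ((Set.toFinite (φ i)).image g).bddAbove ⟨j, hi, rfl⟩

lemma B1_iter_mono (T : ℕ) (g h : X → ℝ) (hne : ∀ i, (φ i).Nonempty) (hgh : g ≤ h) :
    (B1 φ)^[T] g ≤ (B1 φ)^[T] h := by
  induction T generalizing g h with
  | zero => exact hgh
  | succ n ih => rw [Function.iterate_succ']; exact B1_mono φ _ _ hne (ih _ _ hgh)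

lemma F1_iter_mono (T : ℕ) (g h : X → ℝ) (hsurj : ∀ j : X, ∃ i, j ∈ φ i) (hgh : g ≤ h) :
    (F1 φ)^[T] g ≤ (F1 φ)^[T] h := by
  induction T generalizing g h with
  | zero => exact hgh
  | succ n ih => rw [Function.iterate_succ']; exact F1_mono φ _ _ hsurj (ih _ _ hgh)

lemma B1F1_iter_le (T : ℕ) (h : X → ℝ) (hne : ∀ i, (φ i).Nonempty)
    (hsurj : ∀ j : X, ∃ i, j ∈ φ i) :
    (B1 φ)^[T] ((F1 φ)^[T] h) ≤ h := by
  induction T generalizing h with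
  | zero => exact le_rfl
  | succ n ih =>
    rw [Function.iterate_succ', Function.iterate_succ]
    simp only [Function.comp_apply]
    calc B1 φ ((B1 φ)^[n] ((F1 φ)^[n] (F1 φ h)))
        ≤ B1 φ (F1 φ h) := B1_mono φ _ _ hne (ih _)
      _ ≤ h := B1F1_le φ _ hne

lemma le_F1B1_iter (T : ℕ) (g : X → ℝ) (hne : ∀ i, (φ i).Nonempty)
    (hsurj : ∀ j : X, ∃ i, j ∈ φ i) :
    g ≤ (F1 φ)^[T] ((B1 φ)^[T] g) := by
  induction T generalizing g with
  | zero => exact le_rfl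
  | succ n ih =>
    rw [Function.iterate_succ, Function.iterate_succ']
    simp only [Function.comp_apply]
    calc g ≤ (F1 φ)^[n] ((B1 φ)^[n] g) := ih _
      _ ≤ (F1 φ)^[n] (F1 φ (B1 φ ((B1 φ)^[n] g))) :=
          F1_iter_mono φ n _ _ hsurj (le_F1B1 φ _ hsurj)

end aux

theorem stmt_7 {X : Type*} [Fintype X] [Nonempty X] (φ : X → Set X)
    (hne : ∀ i, (φ i).Nonempty) (hsurj : ∀ j : X, ∃ i, j ∈ φ i)
    (T : ℕ) (g : X → ℝ) :
    (B1 φ)^[T] ((F1 φ)^[T] ((B1 φ)^[T] g)) = (B1 φ)^[T] g ∧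
    ∀ g₀ : X → ℝ, g₀ = (B1 φ)^[T] g → g₀ = (B1 φ)^[T] ((F1 φ)^[T] g₀) := by
  have key : (B1 φ)^[T] ((F1 φ)^[T] ((B1 φ)^[T] g)) = (B1 φ)^[T] g := by
    apply le_antisymm
    · exact B1F1_iter_le φ T _ hne hsurj
    · exact B1_iter_mono φ T _ _ hne (le_F1B1_iter φ T g hne hsurj)
  exact ⟨key, fun g₀ hg₀ => by rw [hg₀, key]⟩
end

section
/- Counterexample to interior equality in the discrete Mayer problem: let X = {1,2,3}, φ(1) = {2}, φ(2) = {1,3}, φ(3) = {1}, T = 3, g = (1,2,3). Let g₀ = B₁³(g) = (2,3,3), let U(k,·) = F₁^k(g₀) be the forward value function, g₃ = U(3,·) = (2,2,3), and W(k,·) = B₁^{3-k}(g₃) the backward value function. Then U(0,·) = W(0,·) = (2,3,3), U(3,·) = W(3,·) = (2,2,3), but U(1,3) = 3 ≠ 2 = W(1,3). -/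
open Set

/-- The dynamics of Example 5.1: states `0,1,2` stand for `1,2,3`;
`φ(1)={2}, φ(2)={1,3}, φ(3)={1}`. -/
def phiEx : Fin 3 → Set (Fin 3) := ![{1}, {0, 2}, {0}]

lemma B1_eq (g : Fin 3 → ℝ) : B1 phiEx g = ![g 1, max (g 0) (g 2), g 0] := by
  funext j
  fin_cases j <;> simp [B1, phiEx, Set.image_pair, csSup_pair]

lemma F1_set0 (g : Fin 3 → ℝ) :
    {r : ℝ | ∃ i, (0 : Fin 3) ∈ phiEx i ∧ r = g i} = {g 1, g 2} := by
  ext r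
  constructor
  · rintro ⟨i, hi, rfl⟩
    fin_cases i <;> simp_all [phiEx]
  · rintro (rfl | rfl)
    · exact ⟨1, by simp [phiEx], rfl⟩
    · exact ⟨2, by simp [phiEx], rfl⟩

lemma F1_set1 (g : Fin 3 → ℝ) :
    {r : ℝ | ∃ i, (1 : Fin 3) ∈ phiEx i ∧ r = g i} = {g 0} := by
  ext r
  constructor
  · rintro ⟨i, hi, rfl⟩
    fin_cases i <;> simp_all [phiEx]
  · rintro rfl
    exact ⟨0, by simp [phiEx], rfl⟩

lemma F1_set2 (g : Fin 3 → ℝ) :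
    {r : ℝ | ∃ i, (2 : Fin 3) ∈ phiEx i ∧ r = g i} = {g 1} := by
  ext r
  constructor
  · rintro ⟨i, hi, rfl⟩
    fin_cases i <;> simp_all [phiEx]
  · rintro rfl
    exact ⟨1, by simp [phiEx], rfl⟩

lemma F1_eq (g : Fin 3 → ℝ) : F1 phiEx g = ![min (g 1) (g 2), g 0, g 1] := by
  funext j
  fin_cases j
  · show sInf {r : ℝ | ∃ i, (0 : Fin 3) ∈ phiEx i ∧ r = g i} = min (g 1) (g 2)
    rw [F1_set0 g, csInf_pair]
  · show sInf {r : ℝ | ∃ i, (1 : Fin 3) ∈ phiEx i ∧ r = g i} = g 0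
    rw [F1_set1 g, csInf_singleton]
  · show sInf {r : ℝ | ∃ i, (2 : Fin 3) ∈ phiEx i ∧ r = g i} = g 1
    rw [F1_set2 g, csInf_singleton]

/-- Example 5.1: `g=(1,2,3)`, `g₀ = B₁³(g) = (2,3,3)`, `U(k,·)=F₁ᵏ(g₀)`,
`g₃ = U(3,·) = (2,2,3)`, `W(k,·)=B₁^{3-k}(g₃)`: the forward and backward value
functions agree at times `0` and `3` but differ at time `1` in state `3`. -/
theorem stmt_9 :
    (B1 phiEx)^[3] ![(1 : ℝ), 2, 3] = ![(2 : ℝ), 3, 3] ∧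
    (F1 phiEx)^[3] ![(2 : ℝ), 3, 3] = ![(2 : ℝ), 2, 3] ∧
    -- U(0,·) = W(0,·)
    (F1 phiEx)^[0] ![(2 : ℝ), 3, 3] = (B1 phiEx)^[3] ![(2 : ℝ), 2, 3] ∧
    -- U(3,·) = W(3,·)
    (F1 phiEx)^[3] ![(2 : ℝ), 3, 3] = (B1 phiEx)^[0] ![(2 : ℝ), 2, 3] ∧
    -- U(1,3) = 3 ≠ 2 = W(1,3)
    (F1 phiEx)^[1] ![(2 : ℝ), 3, 3] 2 = 3 ∧
    (B1 phiEx)^[2] ![(2 : ℝ), 2, 3] 2 = 2 := by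
  refine ⟨?_, ?_, ?_, ?_, ?_, ?_⟩ <;>
    simp [Function.iterate_succ', B1_eq, F1_eq] <;>
    norm_num
end

section
/- For every α ≥ 0, the function v_α(t,x) = α·min{0, |x| − t} on [0,T] × ℝ is a backward viscosity solution of vₜ + |vₓ| = 0 on (0,T) × ℝ with v_α(0,x) = 0 for all x. Hence the backward viscosity solution with a prescribed restriction at time 0 is not unique. -/
open Set Filter Topology





/-- Superdifferential of `u` at `z = (t,x)`, defined via `C¹` test functions
touching `u` from above: `p ∈ ∂₊u(z)` iff `p = ∇φ(z)` for some `C¹` function `φ`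
such that `u - φ` has a local maximum at `z`. -/
def superdiff (u : ℝ × ℝ → ℝ) (z : ℝ × ℝ) : Set (ℝ × ℝ) :=
  {p | ∃ φ : ℝ × ℝ → ℝ, ContDiff ℝ 1 φ ∧ IsLocalMax (fun y => u y - φ y) z ∧
    p.1 = fderiv ℝ φ z (1, 0) ∧ p.2 = fderiv ℝ φ z (0, 1)}

/-- Subdifferential of `u` at `z = (t,x)`, via `C¹` test functions touching from below. -/
def subdiff (u : ℝ × ℝ → ℝ) (z : ℝ × ℝ) : Set (ℝ × ℝ) :=
  {p | ∃ φ : ℝ × ℝ → ℝ, ContDiff ℝ 1 φ ∧ IsLocalMin (fun y => u y - φ y) z ∧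
    p.1 = fderiv ℝ φ z (1, 0) ∧ p.2 = fderiv ℝ φ z (0, 1)}

/-- `u` is a forward viscosity solution of `uₜ + H(x,uₓ) = 0` on `(0,T) × ℝ`. -/
def IsForwardViscSol (H : ℝ → ℝ → ℝ) (T : ℝ) (u : ℝ × ℝ → ℝ) : Prop :=
  Continuous u ∧ ∀ t x : ℝ, t ∈ Ioo 0 T →
    (∀ p ∈ superdiff u (t, x), p.1 + H x p.2 ≤ 0) ∧
    (∀ p ∈ subdiff u (t, x), 0 ≤ p.1 + H x p.2)

/-- `u` is a backward viscosity solution of `uₜ + H(x,uₓ) = 0` on `(0,T) × ℝ`. -/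
def IsBackwardViscSol (H : ℝ → ℝ → ℝ) (T : ℝ) (u : ℝ × ℝ → ℝ) : Prop :=
  Continuous u ∧ ∀ t x : ℝ, t ∈ Ioo 0 T →
    (∀ p ∈ superdiff u (t, x), 0 ≤ p.1 + H x p.2) ∧
    (∀ p ∈ subdiff u (t, x), p.1 + H x p.2 ≤ 0)



private lemma line_hasDerivAt {φ : ℝ × ℝ → ℝ} (hφ : ContDiff ℝ 1 φ) (z w : ℝ × ℝ) :
    HasDerivAt (fun h : ℝ => φ (z + h • w)) (fderiv ℝ φ z w) 0 := by
  have hline : HasDerivAt (fun h : ℝ => z + h • w) w 0 := by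
    simpa using ((hasDerivAt_id (0:ℝ)).smul_const w).const_add z
  have hφ' : HasFDerivAt φ (fderiv ℝ φ z) (z + (0:ℝ) • w) := by
    simpa using (hφ.differentiable one_ne_zero z).hasFDerivAt
  exact hφ'.comp_hasDerivAt 0 hline

private lemma isLocalMax_line {f : ℝ × ℝ → ℝ} {z : ℝ × ℝ} (h : IsLocalMax f z) (w : ℝ × ℝ) :
    IsLocalMax (fun s : ℝ => f (z + s • w)) 0 := by
  have hc : ContinuousAt (fun s : ℝ => z + s • w) 0 := by fun_prop
  have h0 : z + (0:ℝ) • w = z := by simp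
  have ht : Filter.Tendsto (fun s : ℝ => z + s • w) (𝓝 0) (𝓝 z) := by
    simpa [h0] using hc.tendsto
  have := ht.eventually h
  simpa [IsLocalMax, IsMaxFilter, h0] using this

private lemma isLocalMin_line {f : ℝ × ℝ → ℝ} {z : ℝ × ℝ} (h : IsLocalMin f z) (w : ℝ × ℝ) :
    IsLocalMin (fun s : ℝ => f (z + s • w)) 0 := by
  have hc : ContinuousAt (fun s : ℝ => z + s • w) 0 := by fun_prop
  have h0 : z + (0:ℝ) • w = z := by simp
  have ht : Filter.Tendsto (fun s : ℝ => z + s • w) (𝓝 0) (𝓝 z) := by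
    simpa [h0] using hc.tendsto
  have := ht.eventually h
  simpa [IsLocalMin, IsMinFilter, h0] using this

private lemma deriv_le_of_right {g : ℝ → ℝ} {d m : ℝ} (hg : HasDerivAt g d 0)
    (h : ∀ᶠ x in 𝓝[>] (0:ℝ), g x ≤ g 0 + m * x) : d ≤ m := by
  have hs : Tendsto (slope g 0) (𝓝[>] 0) (𝓝 d) :=
    (hasDerivAt_iff_tendsto_slope.1 hg).mono_left
      (nhdsWithin_mono _ fun x hx => ne_of_gt hx)
  refine le_of_tendsto hs ?_
  filter_upwards [h, self_mem_nhdsWithin] with x hx hx0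
  have hx0' : (0:ℝ) < x := hx0
  rw [slope_def_field, sub_zero, div_le_iff₀ hx0']
  linarith

private lemma deriv_ge_of_right {g : ℝ → ℝ} {d m : ℝ} (hg : HasDerivAt g d 0)
    (h : ∀ᶠ x in 𝓝[>] (0:ℝ), g 0 + m * x ≤ g x) : m ≤ d := by
  have hs : Tendsto (slope g 0) (𝓝[>] 0) (𝓝 d) :=
    (hasDerivAt_iff_tendsto_slope.1 hg).mono_left
      (nhdsWithin_mono _ fun x hx => ne_of_gt hx)
  refine ge_of_tendsto hs ?_
  filter_upwards [h, self_mem_nhdsWithin] with x hx hx0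
  have hx0' : (0:ℝ) < x := hx0
  rw [slope_def_field, sub_zero, le_div_iff₀ hx0']
  linarith

private lemma deriv_ge_of_left {g : ℝ → ℝ} {d m : ℝ} (hg : HasDerivAt g d 0)
    (h : ∀ᶠ x in 𝓝[<] (0:ℝ), g x ≤ g 0 + m * x) : m ≤ d := by
  have hs : Tendsto (slope g 0) (𝓝[<] 0) (𝓝 d) :=
    (hasDerivAt_iff_tendsto_slope.1 hg).mono_left
      (nhdsWithin_mono _ fun x hx => ne_of_lt hx)
  refine ge_of_tendsto hs ?_
  filter_upwards [h, self_mem_nhdsWithin] with x hx hx0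
  have hx0' : x < (0:ℝ) := hx0
  rw [slope_def_field, sub_zero, le_div_iff_of_neg hx0']
  linarith

private lemma fderiv_eq_of_touch_above {φ u : ℝ × ℝ → ℝ} {z : ℝ × ℝ} {a b : ℝ}
    (hφ : ContDiff ℝ 1 φ) (hmax : IsLocalMax (fun y => u y - φ y) z)
    (hle : ∀ᶠ y in 𝓝 z, u z + a * (y.1 - z.1) + b * (y.2 - z.2) ≤ u y) :
    fderiv ℝ φ z (1, 0) = a ∧ fderiv ℝ φ z (0, 1) = b := by
  set f : ℝ × ℝ → ℝ := fun y => u z + a * (y.1 - z.1) + b * (y.2 - z.2) with hf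
  set L : ℝ × ℝ →L[ℝ] ℝ := a • (ContinuousLinearMap.fst ℝ ℝ ℝ) + b • (ContinuousLinearMap.snd ℝ ℝ ℝ) with hL
  have hfd : HasFDerivAt f L z := by
    have h1 : HasFDerivAt (fun y : ℝ × ℝ => y.1 - z.1) (ContinuousLinearMap.fst ℝ ℝ ℝ) z :=
      (hasFDerivAt_fst).sub_const _
    have h2 : HasFDerivAt (fun y : ℝ × ℝ => y.2 - z.2) (ContinuousLinearMap.snd ℝ ℝ ℝ) z :=
      (hasFDerivAt_snd).sub_const _
    exact ((h1.const_mul a).const_add (u z)).add (h2.const_mul b)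
  have hmax' : IsLocalMax (fun y => f y - φ y) z := by
    filter_upwards [hmax, hle] with y h1 h2
    have hfz : f z = u z := by simp [hf]
    have : f y - φ y ≤ u y - φ y := by simp only [hf]; linarith
    calc f y - φ y ≤ u y - φ y := this
      _ ≤ u z - φ z := h1
      _ = f z - φ z := by rw [hfz]
  have hzero : L - fderiv ℝ φ z = 0 :=
    hmax'.hasFDerivAt_eq_zero (hfd.sub (hφ.differentiable one_ne_zero z).hasFDerivAt)
  have hLe : fderiv ℝ φ z = L := by
    have := sub_eq_zero.1 hzero; exact this.symm
  constructor <;> rw [hLe] <;> simp [hL]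

private lemma fderiv_eq_of_touch_below {φ u : ℝ × ℝ → ℝ} {z : ℝ × ℝ} {a b : ℝ}
    (hφ : ContDiff ℝ 1 φ) (hmin : IsLocalMin (fun y => u y - φ y) z)
    (hle : ∀ᶠ y in 𝓝 z, u y ≤ u z + a * (y.1 - z.1) + b * (y.2 - z.2)) :
    fderiv ℝ φ z (1, 0) = a ∧ fderiv ℝ φ z (0, 1) = b := by
  set f : ℝ × ℝ → ℝ := fun y => u z + a * (y.1 - z.1) + b * (y.2 - z.2) with hf
  set L : ℝ × ℝ →L[ℝ] ℝ := a • (ContinuousLinearMap.fst ℝ ℝ ℝ) + b • (ContinuousLinearMap.snd ℝ ℝ ℝ) with hL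
  have hfd : HasFDerivAt f L z := by
    have h1 : HasFDerivAt (fun y : ℝ × ℝ => y.1 - z.1) (ContinuousLinearMap.fst ℝ ℝ ℝ) z :=
      (hasFDerivAt_fst).sub_const _
    have h2 : HasFDerivAt (fun y : ℝ × ℝ => y.2 - z.2) (ContinuousLinearMap.snd ℝ ℝ ℝ) z :=
      (hasFDerivAt_snd).sub_const _
    exact ((h1.const_mul a).const_add (u z)).add (h2.const_mul b)
  have hmin' : IsLocalMin (fun y => f y - φ y) z := by
    filter_upwards [hmin, hle] with y h1 h2
    have hfz : f z = u z := by simp [hf]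
    have : u y - φ y ≤ f y - φ y := by simp only [hf]; linarith
    calc f z - φ z = u z - φ z := by rw [hfz]
      _ ≤ u y - φ y := h1
      _ ≤ f y - φ y := this
  have hzero : L - fderiv ℝ φ z = 0 :=
    hmin'.hasFDerivAt_eq_zero (hfd.sub (hφ.differentiable one_ne_zero z).hasFDerivAt)
  have hLe : fderiv ℝ φ z = L := by
    have := sub_eq_zero.1 hzero; exact this.symm
  constructor <;> rw [hLe] <;> simp [hL]

/-- For every `α ≥ 0`, `v_α(t,x) = α·min{0, |x| − t}` is a backward viscosity
solution of `vₜ + |vₓ| = 0` on `(0,T) × ℝ` with `v_α(0,·) ≡ 0`; hence the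
backward viscosity solution with a prescribed value at time `0` is not unique. -/
theorem stmt_12 (T : ℝ) (hT : 0 < T) :
    ∀ α : ℝ, 0 ≤ α →
      IsBackwardViscSol (fun _ p => |p|) T (fun z => α * min 0 (|z.2| - z.1)) ∧
      (∀ x : ℝ, (fun z : ℝ × ℝ => α * min 0 (|z.2| - z.1)) (0, x) = 0) := by
  intro α hα
  set u : ℝ × ℝ → ℝ := fun z => α * min 0 (|z.2| - z.1) with hu
  have hu' : ∀ y : ℝ × ℝ, u y = α * min 0 (|y.2| - y.1) := fun _ => rfl
  refine ⟨⟨?_, ?_⟩, fun x => ?_⟩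
  · rw [hu]; fun_prop
  · rintro t x ⟨ht0, htT⟩
    rcases lt_trichotomy t |x| with hcase | hcase | hcase
    · -- Case 1 : t < |x|, u ≡ 0 near (t,x)
      have hopen : IsOpen {y : ℝ × ℝ | y.1 < |y.2|} :=
        isOpen_lt continuous_fst (continuous_abs.comp continuous_snd)
      have hmem : ((t, x) : ℝ × ℝ) ∈ {y : ℝ × ℝ | y.1 < |y.2|} := hcase
      have hev : ∀ᶠ y in 𝓝 ((t, x) : ℝ × ℝ),
          u y = u (t, x) + 0 * (y.1 - t) + 0 * (y.2 - x) := by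
        filter_upwards [hopen.mem_nhds hmem] with y hy
        have hy' : y.1 < |y.2| := hy
        have h1 : min 0 (|y.2| - y.1) = 0 := min_eq_left (by linarith)
        have h2 : min 0 (|x| - t) = 0 := min_eq_left (by linarith)
        rw [hu' y, hu' (t, x)]; simp [h1, h2]
      constructor
      · rintro p ⟨φ, hφ, hmax, hp1, hp2⟩
        obtain ⟨e1, e2⟩ := fderiv_eq_of_touch_above (z := (t, x)) hφ hmax
          (hev.mono fun y hy => le_of_eq hy.symm)
        show (0:ℝ) ≤ p.1 + |p.2|
        rw [hp1, hp2, e1, e2]; simp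
      · rintro p ⟨φ, hφ, hmin, hp1, hp2⟩
        obtain ⟨e1, e2⟩ := fderiv_eq_of_touch_below (z := (t, x)) hφ hmin
          (hev.mono fun y hy => le_of_eq hy)
        show p.1 + |p.2| ≤ (0:ℝ)
        rw [hp1, hp2, e1, e2]; simp
    · -- Case 2 : t = |x| (kink of the min)
      set s : ℝ := if 0 < x then 1 else -1 with hsdef
      have hs : s * x = |x| := by
        rcases lt_or_ge 0 x with hx | hx
        · rw [hsdef, if_pos hx, one_mul, abs_of_pos hx]
        · rw [hsdef, if_neg (not_lt.2 hx), abs_of_nonpos hx]; ring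
      have hss : s * s = 1 := by
        by_cases hx : 0 < x <;> simp [hsdef, hx]
      have habs_s : |s| = 1 := by
        by_cases hx : 0 < x <;> simp [hsdef, hx]
      have key : ∀ h : ℝ, h ∈ Ioo (-t) t → |x + h * s| = t + h := by
        intro h hh
        have h1 : s * (x + h * s) = t + h := by
          have h1' : s * (x + h * s) = s * x + h * (s * s) := by ring
          rw [h1', hss, hs, ← hcase]; ring
        have h2 : (0 : ℝ) < t + h := by linarith [hh.1]
        calc |x + h * s| = |s| * |x + h * s| := by rw [habs_s, one_mul]
          _ = |s * (x + h * s)| := (abs_mul s _).symm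
          _ = |t + h| := by rw [h1]
          _ = t + h := abs_of_pos h2
      have hIoo : ∀ᶠ h : ℝ in 𝓝 (0:ℝ), h ∈ Ioo (-t) t := by
        filter_upwards [Ioo_mem_nhds (show -t < (0:ℝ) by linarith) ht0] with h hh
        exact hh
      have huz : u (t, x) = 0 := by
        rw [hu' (t, x), ← hcase]; simp
      constructor
      · rintro p ⟨φ, hφ, hmax, hp1, hp2⟩
        -- direction (1, s) : u vanishes along this line
        have hl1 := isLocalMax_line hmax ((1 : ℝ), s)
        have hev1 : (fun h : ℝ => u ((t, x) + h • ((1 : ℝ), s)) - φ ((t, x) + h • ((1 : ℝ), s)))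
            =ᶠ[𝓝 0] fun h : ℝ => 0 - φ ((t, x) + h • ((1 : ℝ), s)) := by
          filter_upwards [hIoo] with h hh
          have hpt : ((t, x) + h • ((1 : ℝ), s)) = (t + h, x + h * s) := by
            simp [Prod.ext_iff, mul_comm]
          rw [hpt, hu' (t + h, x + h * s)]
          simp [key h hh]
        have hd1 : HasDerivAt (fun h : ℝ => 0 - φ ((t, x) + h • ((1 : ℝ), s)))
            (0 - fderiv ℝ φ (t, x) (1, s)) 0 :=
          (hasDerivAt_const 0 0).sub (line_hasDerivAt hφ (t, x) (1, s))
        have e1 : fderiv ℝ φ (t, x) (1, s) = 0 := by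
          have h0 := (hl1.congr hev1).hasDerivAt_eq_zero hd1
          linarith [h0]
        -- direction (0, s)
        have hl2 := isLocalMax_line hmax ((0 : ℝ), s)
        have e2 : 0 ≤ fderiv ℝ φ (t, x) (0, s) := by
          refine deriv_ge_of_right (line_hasDerivAt hφ (t, x) (0, s)) ?_
          have hl2' : ∀ᶠ h : ℝ in 𝓝[>] (0:ℝ),
              u ((t, x) + h • ((0:ℝ), s)) - φ ((t, x) + h • ((0:ℝ), s)) ≤
                u ((t, x) + (0:ℝ) • ((0:ℝ), s)) - φ ((t, x) + (0:ℝ) • ((0:ℝ), s)) :=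
            Filter.Eventually.filter_mono nhdsWithin_le_nhds hl2
          have hIoo' : ∀ᶠ h : ℝ in 𝓝[>] (0:ℝ), h ∈ Ioo (-t) t :=
            Filter.Eventually.filter_mono nhdsWithin_le_nhds hIoo
          filter_upwards [hl2', hIoo', self_mem_nhdsWithin] with h hh hmemI hpos
          have hpos' : (0:ℝ) < h := hpos
          have hpt : ((t, x) + h • ((0 : ℝ), s)) = ((t:ℝ), x + h * s) := by
            simp [Prod.ext_iff, mul_comm]
          have hpt0 : ((t, x) + (0 : ℝ) • ((0 : ℝ), s)) = ((t : ℝ), x) := by simp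
          have hval : u ((t:ℝ), x + h * s) = 0 := by
            rw [hu' _]
            simp only
            rw [key h hmemI, show t + h - t = h from by ring,
              min_eq_left (le_of_lt hpos'), mul_zero]
          rw [hpt, hpt0, hval, huz] at hh
          rw [hpt0, hpt]
          linarith [hh]
        -- combine
        have hsplit : ((1 : ℝ), s) = ((1 : ℝ), (0 : ℝ)) + s • ((0 : ℝ), (1 : ℝ)) := by
          simp
        have h1s : fderiv ℝ φ (t, x) (1, s)
            = fderiv ℝ φ (t, x) (1, 0) + s * fderiv ℝ φ (t, x) (0, 1) := by
          rw [hsplit, map_add, map_smul, smul_eq_mul]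
        have h0s : fderiv ℝ φ (t, x) ((0 : ℝ), s) = s * fderiv ℝ φ (t, x) (0, 1) := by
          have hw : ((0 : ℝ), s) = s • ((0 : ℝ), (1 : ℝ)) := by simp
          rw [hw, map_smul, smul_eq_mul]
        have hsum : p.1 + s * p.2 = 0 := by rw [hp1, hp2, ← h1s, e1]
        have hpos2 : 0 ≤ s * p.2 := by rw [hp2, ← h0s]; exact e2
        have habs2 : |p.2| = s * p.2 := by
          calc |p.2| = |s| * |p.2| := by rw [habs_s, one_mul]
            _ = |s * p.2| := (abs_mul s p.2).symm
            _ = s * p.2 := abs_of_nonneg hpos2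
        show (0:ℝ) ≤ p.1 + |p.2|
        rw [habs2]
        linarith [hsum]
      · rintro p ⟨φ, hφ, hmin, hp1, hp2⟩
        have hle : ∀ᶠ y in 𝓝 ((t, x) : ℝ × ℝ),
            u y ≤ u (t, x) + 0 * (y.1 - t) + 0 * (y.2 - x) := by
          refine Filter.Eventually.of_forall fun y => ?_
          rw [huz, hu' y]
          have hm : min 0 (|y.2| - y.1) ≤ 0 := min_le_left _ _
          nlinarith
        obtain ⟨e1, e2⟩ := fderiv_eq_of_touch_below (z := (t, x)) hφ hmin hle
        show p.1 + |p.2| ≤ (0:ℝ)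
        rw [hp1, hp2, e1, e2]; simp
    · -- Case 3 : |x| < t
      by_cases hx0 : x = 0
      · subst hx0
        have huz : u (t, (0:ℝ)) = α * (0 - t) := by
          rw [hu' _]
          simp only [abs_zero, zero_sub]
          rw [min_eq_right (by linarith : -t ≤ (0:ℝ))]
        constructor
        · rintro p ⟨φ, hφ, hmax, hp1, hp2⟩
          have hopen : IsOpen {y : ℝ × ℝ | |y.2| < y.1} :=
            isOpen_lt (continuous_abs.comp continuous_snd) continuous_fst
          have hmem : ((t, (0:ℝ)) : ℝ × ℝ) ∈ {y : ℝ × ℝ | |y.2| < y.1} := by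
            simpa using ht0
          have hle : ∀ᶠ y in 𝓝 ((t, (0:ℝ)) : ℝ × ℝ),
              u (t, (0:ℝ)) + (-α) * (y.1 - t) + α * (y.2 - 0) ≤ u y := by
            filter_upwards [hopen.mem_nhds hmem] with y hy
            have hy' : |y.2| < y.1 := hy
            have h1 : min 0 (|y.2| - y.1) = |y.2| - y.1 := min_eq_right (by linarith)
            rw [huz, hu' y, h1]
            have hm : α * y.2 ≤ α * |y.2| := mul_le_mul_of_nonneg_left (le_abs_self _) hα
            nlinarith
          obtain ⟨e1, e2⟩ := fderiv_eq_of_touch_above (z := ((t : ℝ), (0:ℝ))) hφ hmax hle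
          show (0:ℝ) ≤ p.1 + |p.2|
          rw [hp1, hp2, e1, e2, abs_of_nonneg hα]
          linarith
        · rintro p ⟨φ, hφ, hmin, hp1, hp2⟩
          have hIoo : ∀ᶠ h : ℝ in 𝓝 (0:ℝ), h ∈ Ioo (-t) t := by
            filter_upwards [Ioo_mem_nhds (show -t < (0:ℝ) by linarith) ht0] with h hh
            exact hh
          -- direction (1,0)
          have hl1 := isLocalMin_line hmin ((1 : ℝ), (0:ℝ))
          have hev1 : (fun h : ℝ => u ((t, (0:ℝ)) + h • ((1 : ℝ), (0:ℝ)))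
                - φ ((t, (0:ℝ)) + h • ((1 : ℝ), (0:ℝ))))
              =ᶠ[𝓝 0] fun h : ℝ => α * (0 - (t + h)) - φ ((t, (0:ℝ)) + h • ((1 : ℝ), (0:ℝ))) := by
            filter_upwards [hIoo] with h hh
            have h2 : (0:ℝ) < t + h := by linarith [hh.1]
            have hpt : ((t, (0:ℝ)) + h • ((1 : ℝ), (0:ℝ))) = (t + h, (0:ℝ)) := by
              simp [Prod.ext_iff]
            rw [hpt, hu' (t + h, (0:ℝ))]
            simp only [abs_zero, zero_sub]
            rw [min_eq_right (by linarith : -(t+h) ≤ (0:ℝ))]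
          have hd1 : HasDerivAt
              (fun h : ℝ => α * (0 - (t + h)) - φ ((t, (0:ℝ)) + h • ((1 : ℝ), (0:ℝ))))
              (-α - fderiv ℝ φ (t, (0:ℝ)) (1, 0)) 0 := by
            have ha : HasDerivAt (fun h : ℝ => α * (0 - (t + h))) (-α) 0 := by
              have := (((hasDerivAt_id (0:ℝ)).const_add t).const_sub 0).const_mul α
              simpa using this
            exact ha.sub (line_hasDerivAt hφ (t, (0:ℝ)) (1, 0))
          have e1 : fderiv ℝ φ (t, (0:ℝ)) (1, 0) = -α := by
            have h0 := (hl1.congr hev1).hasDerivAt_eq_zero hd1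
            linarith [h0]
          -- direction (0,1)
          have hl2 := isLocalMin_line hmin ((0 : ℝ), (1:ℝ))
          have hev2 : ∀ᶠ h : ℝ in 𝓝 (0:ℝ),
              φ ((t, (0:ℝ)) + h • ((0:ℝ), (1:ℝ))) ≤
                φ ((t, (0:ℝ)) + (0:ℝ) • ((0:ℝ), (1:ℝ))) + α * |h| := by
            filter_upwards [hl2, hIoo] with h hh hmemI
            have hpt : ((t, (0:ℝ)) + h • ((0:ℝ), (1:ℝ))) = ((t : ℝ), h) := by
              simp [Prod.ext_iff]
            have hpt0 : ((t, (0:ℝ)) + (0:ℝ) • ((0:ℝ), (1:ℝ))) = ((t : ℝ), (0:ℝ)) := by simp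
            have hval : u ((t : ℝ), h) = α * (|h| - t) := by
              rw [hu' _]
              have hm : min 0 (|h| - t) = |h| - t := by
                refine min_eq_right ?_
                rcases hmemI with ⟨hm1, hm2⟩
                rcases abs_cases h with ⟨he, _⟩ | ⟨he, _⟩ <;> rw [he] <;> linarith
              simp only
              rw [hm]
            rw [hpt, hpt0] at hh ⊢
            rw [hval, huz] at hh
            nlinarith [hh]
          have hd2 := line_hasDerivAt hφ (t, (0:ℝ)) ((0:ℝ), (1:ℝ))
          have e2a : fderiv ℝ φ (t, (0:ℝ)) (0, 1) ≤ α := by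
            refine deriv_le_of_right hd2 ?_
            have hev2' := Filter.Eventually.filter_mono
              (nhdsWithin_le_nhds : 𝓝[>] (0:ℝ) ≤ 𝓝 0) hev2
            filter_upwards [hev2', self_mem_nhdsWithin] with h hh hpos
            have hpos' : (0:ℝ) < h := hpos
            rw [abs_of_pos hpos'] at hh
            linarith [hh]
          have e2b : -α ≤ fderiv ℝ φ (t, (0:ℝ)) (0, 1) := by
            refine deriv_ge_of_left hd2 ?_
            have hev2' := Filter.Eventually.filter_mono
              (nhdsWithin_le_nhds : 𝓝[<] (0:ℝ) ≤ 𝓝 0) hev2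
            filter_upwards [hev2', self_mem_nhdsWithin] with h hh hneg
            have hneg' : h < (0:ℝ) := hneg
            rw [abs_of_neg hneg'] at hh
            linarith [hh]
          show p.1 + |p.2| ≤ (0:ℝ)
          rw [hp1, hp2, e1]
          have habs : |fderiv ℝ φ (t, (0:ℝ)) (0, 1)| ≤ α := abs_le.2 ⟨e2b, e2a⟩
          linarith
      · -- x ≠ 0 : smooth linear region
        set s : ℝ := if 0 < x then 1 else -1 with hsdef
        have hs : s * x = |x| := by
          rcases lt_or_ge 0 x with hx | hx
          · rw [hsdef, if_pos hx, one_mul, abs_of_pos hx]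
          · rw [hsdef, if_neg (not_lt.2 hx), abs_of_nonpos hx]; ring
        have habs_s : |s| = 1 := by
          by_cases hx : 0 < x <;> simp [hsdef, hx]
        have hsx : 0 < s * x := by
          rw [hs]; exact abs_pos.2 hx0
        have hopen : IsOpen {y : ℝ × ℝ | |y.2| < y.1 ∧ 0 < s * y.2} :=
          (isOpen_lt (continuous_abs.comp continuous_snd) continuous_fst).inter
            (isOpen_lt continuous_const (continuous_const.mul continuous_snd))
        have hmem : ((t, x) : ℝ × ℝ) ∈ {y : ℝ × ℝ | |y.2| < y.1 ∧ 0 < s * y.2} :=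
          ⟨hcase, hsx⟩
        have hev : ∀ᶠ y in 𝓝 ((t, x) : ℝ × ℝ),
            u y = u (t, x) + (-α) * (y.1 - t) + (α * s) * (y.2 - x) := by
          filter_upwards [hopen.mem_nhds hmem] with y hy
          obtain ⟨hy1, hy2⟩ := hy
          have habs : |y.2| = s * y.2 := by
            calc |y.2| = |s| * |y.2| := by rw [habs_s, one_mul]
              _ = |s * y.2| := (abs_mul s _).symm
              _ = s * y.2 := abs_of_pos hy2
          have habsx : |x| = s * x := hs.symm
          have h1 : min 0 (|y.2| - y.1) = |y.2| - y.1 := min_eq_right (by linarith)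
          have h2 : min 0 (|x| - t) = |x| - t := min_eq_right (by linarith)
          rw [hu' y, hu' (t, x), h1, h2, habs, habsx]
          ring
        have habs_as : |α * s| = α := by
          rw [abs_mul, habs_s, mul_one, abs_of_nonneg hα]
        constructor
        · rintro p ⟨φ, hφ, hmax, hp1, hp2⟩
          obtain ⟨e1, e2⟩ := fderiv_eq_of_touch_above (z := (t, x)) hφ hmax
            (hev.mono fun y hy => le_of_eq hy.symm)
          show (0:ℝ) ≤ p.1 + |p.2|
          rw [hp1, hp2, e1, e2, habs_as]
          linarith
        · rintro p ⟨φ, hφ, hmin, hp1, hp2⟩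
          obtain ⟨e1, e2⟩ := fderiv_eq_of_touch_below (z := (t, x)) hφ hmin
            (hev.mono fun y hy => le_of_eq hy)
          show p.1 + |p.2| ≤ (0:ℝ)
          rw [hp1, hp2, e1, e2, habs_as]
          linarith
  · rw [hu' (0, x), sub_zero, min_eq_left (abs_nonneg x), mul_zero]
end

section
/- The function u(t,x) = max{1 − |x|e^{t−T}, |x|e^{T−t} − 1, (e^{2T}−1)/(e^{2T}+1)} is a bilateral viscosity solution of uₜ + |x||uₓ| = 0 on (0,T) × ℝ, and it is neither semiconvex nor semiconcave on [0,T] × ℝ. -/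
open Set

/-- `u` is semiconvex on `S`: `u + C‖·‖²` is convex on `S` for some `C`. -/
def SemiconvexOn (S : Set (ℝ × ℝ)) (u : ℝ × ℝ → ℝ) : Prop :=
  ∃ C : ℝ, ConvexOn ℝ S (fun z => u z + C * ‖z‖ ^ 2)

/-- `u` is semiconcave on `S`: `u − C‖·‖²` is concave on `S` for some `C`. -/
def SemiconcaveOn (S : Set (ℝ × ℝ)) (u : ℝ × ℝ → ℝ) : Prop :=
  ∃ C : ℝ, ConcaveOn ℝ S (fun z => u z - C * ‖z‖ ^ 2)

open Filter

noncomputable def U (T : ℝ) : ℝ × ℝ → ℝ := fun z =>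
  max (max (1 - |z.2| * Real.exp (z.1 - T)) (|z.2| * Real.exp (T - z.1) - 1))
    ((Real.exp (2 * T) - 1) / (Real.exp (2 * T) + 1))

section Helpers

lemma clm_eval (l : ℝ × ℝ →L[ℝ] ℝ) (v1 v2 : ℝ) :
    l (v1, v2) = v1 * l (1, 0) + v2 * l (0, 1) := by
  have h : (v1, v2) = v1 • ((1:ℝ), (0:ℝ)) + v2 • ((0:ℝ), (1:ℝ)) := by
    simp [Prod.ext_iff]
  rw [h, map_add, map_smul, map_smul]; simp [smul_eq_mul]

lemma touch_above {w φ g : ℝ × ℝ → ℝ} {z : ℝ × ℝ} {Dφ Dg : ℝ × ℝ →L[ℝ] ℝ}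
    (hφ : HasFDerivAt φ Dφ z) (hg : HasFDerivAt g Dg z)
    (hmax : IsLocalMax (fun y => w y - φ y) z)
    (hle : ∀ᶠ y in nhds z, g y ≤ w y) (heq : g z = w z) : Dg = Dφ := by
  have h2 : IsLocalMax (fun y => g y - φ y) z := by
    filter_upwards [hmax, hle] with y h1 h2
    calc g y - φ y ≤ w y - φ y := by linarith
    _ ≤ w z - φ z := h1
    _ = g z - φ z := by rw [heq]
  have h3 : Dg - Dφ = 0 := h2.hasFDerivAt_eq_zero (hg.sub hφ)
  exact sub_eq_zero.mp h3

lemma touch_below {w φ g : ℝ × ℝ → ℝ} {z : ℝ × ℝ} {Dφ Dg : ℝ × ℝ →L[ℝ] ℝ}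
    (hφ : HasFDerivAt φ Dφ z) (hg : HasFDerivAt g Dg z)
    (hmin : IsLocalMin (fun y => w y - φ y) z)
    (hle : ∀ᶠ y in nhds z, w y ≤ g y) (heq : g z = w z) : Dg = Dφ := by
  have h2 : IsLocalMin (fun y => g y - φ y) z := by
    filter_upwards [hmin, hle] with y h1 h2
    calc g z - φ z = w z - φ z := by rw [heq]
    _ ≤ w y - φ y := h1
    _ ≤ g y - φ y := by linarith
  have h3 : Dg - Dφ = 0 := h2.hasFDerivAt_eq_zero (hg.sub hφ)
  exact sub_eq_zero.mp h3

lemma squeeze_le {w φ g₁ g₂ : ℝ × ℝ → ℝ} {z : ℝ × ℝ} {Dφ D₁ D₂ : ℝ × ℝ →L[ℝ] ℝ}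
    (hφ : HasFDerivAt φ Dφ z) (h₁ : HasFDerivAt g₁ D₁ z) (h₂ : HasFDerivAt g₂ D₂ z)
    (hmin : IsLocalMin (fun y => w y - φ y) z)
    (hw : ∀ᶠ y in nhds z, w y = max (g₁ y) (g₂ y)) (he : g₁ z = g₂ z)
    (v : ℝ × ℝ) : Dφ v ≤ max (D₁ v) (D₂ v) := by
  have hwz : w z = max (g₁ z) (g₂ z) := hw.self_of_nhds
  have key : ∀ᶠ y in nhds z, φ y - φ z ≤ max (g₁ y - g₁ z) (g₂ y - g₂ z) := by
    filter_upwards [hmin, hw] with y hy1 hy2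
    have hmm : max (g₁ y - g₁ z) (g₂ y - g₂ z) = max (g₁ y) (g₂ y) - g₁ z := by
      rw [he]; rcases le_total (g₁ y) (g₂ y) with h | h
      · rw [max_eq_right h, max_eq_right (by linarith)]
      · rw [max_eq_left h, max_eq_left (by linarith)]
    have hwz1 : w z = g₁ z := by rw [hwz, he, max_self]
    have h1 : w z - φ z ≤ w y - φ y := hy1
    rw [hmm, ← hy2]
    linarith
  have hz0 : z + (0:ℝ) • v = z := by simp
  have hline : HasDerivAt (fun h : ℝ => z + h • v) v 0 := by
    simpa using ((hasDerivAt_id (0:ℝ)).smul_const v).const_add z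
  have dd : ∀ (f : ℝ × ℝ → ℝ) (Df : ℝ × ℝ →L[ℝ] ℝ), HasFDerivAt f Df z →
      HasDerivAt (fun h : ℝ => f (z + h • v)) (Df v) 0 := by
    intro f Df hf
    have hf' : HasFDerivAt f Df ((fun h : ℝ => z + h • v) 0) := by simpa using hf
    exact hf'.comp_hasDerivAt 0 hline
  have dφ := dd φ Dφ hφ
  have d1 := dd g₁ D₁ h₁
  have d2 := dd g₂ D₂ h₂
  have l0 : nhdsWithin (0:ℝ) (Ioi 0) ≤ nhdsWithin 0 {0}ᶜ :=
    nhdsWithin_mono 0 (fun h hh => ne_of_gt hh)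
  have sφ : Tendsto (slope (fun h : ℝ => φ (z + h • v)) 0) (nhdsWithin 0 (Ioi 0)) (nhds (Dφ v)) :=
    (hasDerivAt_iff_tendsto_slope.mp dφ).mono_left l0
  have s1 : Tendsto (slope (fun h : ℝ => g₁ (z + h • v)) 0) (nhdsWithin 0 (Ioi 0)) (nhds (D₁ v)) :=
    (hasDerivAt_iff_tendsto_slope.mp d1).mono_left l0
  have s2 : Tendsto (slope (fun h : ℝ => g₂ (z + h • v)) 0) (nhdsWithin 0 (Ioi 0)) (nhds (D₂ v)) :=
    (hasDerivAt_iff_tendsto_slope.mp d2).mono_left l0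
  have smax : Tendsto (fun h => max (slope (fun h : ℝ => g₁ (z + h • v)) 0 h)
      (slope (fun h : ℝ => g₂ (z + h • v)) 0 h)) (nhdsWithin 0 (Ioi 0))
      (nhds (max (D₁ v) (D₂ v))) := s1.max s2
  refine le_of_tendsto_of_tendsto sφ smax ?_
  have hcont : Tendsto (fun h : ℝ => z + h • v) (nhds 0) (nhds z) := by
    have := hline.continuousAt.tendsto
    rwa [hz0] at this
  have hev : ∀ᶠ h : ℝ in nhds 0, φ (z + h • v) - φ z ≤
      max (g₁ (z + h • v) - g₁ z) (g₂ (z + h • v) - g₂ z) := hcont.eventually key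
  have hev' : ∀ᶠ h : ℝ in nhdsWithin 0 (Ioi 0), φ (z + h • v) - φ z ≤
      max (g₁ (z + h • v) - g₁ z) (g₂ (z + h • v) - g₂ z) :=
    eventually_nhdsWithin_of_eventually_nhds hev
  filter_upwards [hev', self_mem_nhdsWithin] with h hh (hpos : h ∈ Ioi 0)
  have hp : (0:ℝ) < h := hpos
  have e0 : ∀ f : ℝ × ℝ → ℝ, slope (fun h : ℝ => f (z + h • v)) 0 h
      = (f (z + h • v) - f z) / h := by
    intro f; simp [slope_def_field, hz0]
  rw [e0 φ, e0 g₁, e0 g₂, max_div_div_right hp.le]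
  gcongr

noncomputable def Lm (q1 q2 : ℝ) : ℝ × ℝ →L[ℝ] ℝ :=
  q1 • (ContinuousLinearMap.fst ℝ ℝ ℝ) + q2 • (ContinuousLinearMap.snd ℝ ℝ ℝ)

lemma Lm_apply (q1 q2 v1 v2 : ℝ) : Lm q1 q2 (v1, v2) = q1 * v1 + q2 * v2 := by
  simp [Lm, mul_comm]

lemma hA_deriv (T : ℝ) (z : ℝ × ℝ) :
    HasFDerivAt (fun y : ℝ × ℝ => Real.exp (y.1 - T))
      (Real.exp (z.1 - T) • ContinuousLinearMap.fst ℝ ℝ ℝ) z :=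
  (hasFDerivAt_fst.sub_const T).exp

lemma hB_deriv (T : ℝ) (z : ℝ × ℝ) :
    HasFDerivAt (fun y : ℝ × ℝ => Real.exp (T - y.1))
      (Real.exp (T - z.1) • -(ContinuousLinearMap.fst ℝ ℝ ℝ)) z :=
  (hasFDerivAt_fst.const_sub T).exp

lemma hG1_deriv (T : ℝ) (z : ℝ × ℝ) :
    HasFDerivAt (fun y : ℝ × ℝ => 1 - y.2 * Real.exp (y.1 - T))
      (Lm (-(z.2 * Real.exp (z.1 - T))) (-Real.exp (z.1 - T))) z := by
  have h := (hasFDerivAt_snd.mul (hA_deriv T z)).const_sub 1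
  refine h.congr_fderiv ?_
  ext <;> simp [Lm] <;> ring

lemma hG1n_deriv (T : ℝ) (z : ℝ × ℝ) :
    HasFDerivAt (fun y : ℝ × ℝ => 1 + y.2 * Real.exp (y.1 - T))
      (Lm (z.2 * Real.exp (z.1 - T)) (Real.exp (z.1 - T))) z := by
  have h := ((hasFDerivAt_snd.mul (hA_deriv T z))).const_add 1
  refine h.congr_fderiv ?_
  ext <;> simp [Lm] <;> ring

lemma hG1'_deriv (T : ℝ) (z : ℝ × ℝ) :
    HasFDerivAt (fun y : ℝ × ℝ => y.2 * Real.exp (y.1 - T) - 1)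
      (Lm (z.2 * Real.exp (z.1 - T)) (Real.exp (z.1 - T))) z := by
  have h := (hasFDerivAt_snd.mul (hA_deriv T z)).sub_const 1
  refine h.congr_fderiv ?_
  ext <;> simp [Lm] <;> ring

lemma hG1''_deriv (T : ℝ) (z : ℝ × ℝ) :
    HasFDerivAt (fun y : ℝ × ℝ => -(y.2 * Real.exp (y.1 - T)) - 1)
      (Lm (-(z.2 * Real.exp (z.1 - T))) (-(Real.exp (z.1 - T)))) z := by
  have h := ((hasFDerivAt_snd.mul (hA_deriv T z)).neg).sub_const 1
  refine h.congr_fderiv ?_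
  ext <;> simp [Lm] <;> ring

lemma hG2_deriv (T : ℝ) (z : ℝ × ℝ) :
    HasFDerivAt (fun y : ℝ × ℝ => y.2 * Real.exp (T - y.1) - 1)
      (Lm (-(z.2 * Real.exp (T - z.1))) (Real.exp (T - z.1))) z := by
  have h := (hasFDerivAt_snd.mul (hB_deriv T z)).sub_const 1
  refine h.congr_fderiv ?_
  ext <;> simp [Lm] <;> ring

end Helpers
noncomputable def Refl : ℝ × ℝ →L[ℝ] ℝ × ℝ :=
  (ContinuousLinearMap.fst ℝ ℝ ℝ).prod (-(ContinuousLinearMap.snd ℝ ℝ ℝ))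

lemma Refl_apply (y : ℝ × ℝ) : Refl y = (y.1, -y.2) := rfl

lemma superdiff_reflect {u : ℝ × ℝ → ℝ} (hu : ∀ y : ℝ × ℝ, u (y.1, -y.2) = u y)
    {t x : ℝ} {p : ℝ × ℝ} (hp : p ∈ superdiff u (t, x)) :
    (p.1, -p.2) ∈ superdiff u (t, -x) := by
  obtain ⟨φ, hφ, hmax, hp1, hp2⟩ := hp
  refine ⟨fun y => φ (Refl y), hφ.comp Refl.contDiff, ?_, ?_, ?_⟩
  · have htend : Tendsto Refl (nhds (t, -x)) (nhds (t, x)) := by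
      have := Refl.continuous.tendsto (t, -x)
      simpa [Refl_apply] using this
    have := htend.eventually hmax
    filter_upwards [this] with y hy
    calc u y - φ (Refl y) = u (Refl y) - φ (Refl y) := by
          rw [Refl_apply]; rw [hu y]
    _ ≤ u (t, x) - φ (t, x) := hy
    _ = u (t, -x) - φ (Refl (t, -x)) := by
          rw [show Refl (t, -x) = (t, x) by simp [Refl_apply]]
          rw [show u (t,x) = u (t, -x) from by simpa using hu (t, -x)]
  all_goals {
    have hd : HasFDerivAt (fun y => φ (Refl y)) ((fderiv ℝ φ (t, x)).comp Refl) (t, -x) := by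
      have h1 : HasFDerivAt φ (fderiv ℝ φ (t, x)) (Refl (t, -x)) := by
        rw [show Refl (t, -x) = (t, x) by simp [Refl_apply]]
        exact ((hφ.differentiable one_ne_zero) (t, x)).hasFDerivAt
      exact h1.comp (t, -x) Refl.hasFDerivAt
    rw [hd.fderiv]
    simp only [ContinuousLinearMap.comp_apply, Refl_apply]
    norm_num
    first
      | exact hp1
      | (rw [show ((0:ℝ), (-1:ℝ)) = -((0:ℝ),(1:ℝ)) by simp, map_neg]; rw [hp2]) }

lemma subdiff_reflect {u : ℝ × ℝ → ℝ} (hu : ∀ y : ℝ × ℝ, u (y.1, -y.2) = u y)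
    {t x : ℝ} {p : ℝ × ℝ} (hp : p ∈ subdiff u (t, x)) :
    (p.1, -p.2) ∈ subdiff u (t, -x) := by
  obtain ⟨φ, hφ, hmin, hp1, hp2⟩ := hp
  refine ⟨fun y => φ (Refl y), hφ.comp Refl.contDiff, ?_, ?_, ?_⟩
  · have htend : Tendsto Refl (nhds (t, -x)) (nhds (t, x)) := by
      have := Refl.continuous.tendsto (t, -x)
      simpa [Refl_apply] using this
    have := htend.eventually hmin
    filter_upwards [this] with y hy
    calc u (t, -x) - φ (Refl (t, -x)) = u (t, x) - φ (t, x) := by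
          rw [show Refl (t, -x) = (t, x) by simp [Refl_apply]]
          rw [show u (t,x) = u (t, -x) from by simpa using hu (t, -x)]
    _ ≤ u (Refl y) - φ (Refl y) := hy
    _ = u y - φ (Refl y) := by rw [Refl_apply]; rw [hu y]
  all_goals {
    have hd : HasFDerivAt (fun y => φ (Refl y)) ((fderiv ℝ φ (t, x)).comp Refl) (t, -x) := by
      have h1 : HasFDerivAt φ (fderiv ℝ φ (t, x)) (Refl (t, -x)) := by
        rw [show Refl (t, -x) = (t, x) by simp [Refl_apply]]
        exact ((hφ.differentiable one_ne_zero) (t, x)).hasFDerivAt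
      exact h1.comp (t, -x) Refl.hasFDerivAt
    rw [hd.fderiv]
    simp only [ContinuousLinearMap.comp_apply, Refl_apply]
    norm_num
    first
      | exact hp1
      | (rw [show ((0:ℝ), (-1:ℝ)) = -((0:ℝ),(1:ℝ)) by simp, map_neg]; rw [hp2]) }

lemma Lm_zero : Lm 0 0 = 0 := by ext <;> simp [Lm]

lemma branch_case {T : ℝ} {z : ℝ × ℝ} {g : ℝ × ℝ → ℝ} {q1 q2 : ℝ}
    (hg : HasFDerivAt g (Lm q1 q2) z)
    (hev : ∀ᶠ y in nhds z, U T y = g y)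
    (harith : q1 + |z.2| * |q2| = 0) :
    (∀ p ∈ superdiff (U T) z, p.1 + |z.2| * |p.2| = 0) ∧
    (∀ p ∈ subdiff (U T) z, p.1 + |z.2| * |p.2| = 0) := by
  constructor
  · rintro p ⟨φ, hφ, hmax, hp1, hp2⟩
    have hφd : HasFDerivAt φ (fderiv ℝ φ z) z :=
      ((hφ.differentiable one_ne_zero) z).hasFDerivAt
    have heq := touch_above hφd hg hmax (hev.mono fun y hy => hy.ge) hev.self_of_nhds.symm
    have e1 : p.1 = q1 := by rw [hp1, ← heq, Lm_apply]; ring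
    have e2 : p.2 = q2 := by rw [hp2, ← heq, Lm_apply]; ring
    rw [e1, e2]; exact harith
  · rintro p ⟨φ, hφ, hmin, hp1, hp2⟩
    have hφd : HasFDerivAt φ (fderiv ℝ φ z) z :=
      ((hφ.differentiable one_ne_zero) z).hasFDerivAt
    have heq := touch_below hφd hg hmin (hev.mono fun y hy => hy.le) hev.self_of_nhds.symm
    have e1 : p.1 = q1 := by rw [hp1, ← heq, Lm_apply]; ring
    have e2 : p.2 = q2 := by rw [hp2, ← heq, Lm_apply]; ring
    rw [e1, e2]; exact harith

lemma kink_case {T : ℝ} {z : ℝ × ℝ} {g : ℝ × ℝ → ℝ} {q1 q2 : ℝ}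
    (hg : HasFDerivAt g (Lm q1 q2) z) (hq2 : q2 ≠ 0)
    (hx : 0 ≤ z.2) (hq1 : q1 = -(z.2 * |q2|))
    (hev : ∀ᶠ y in nhds z, U T y = max (g y) ((Real.exp (2 * T) - 1) / (Real.exp (2 * T) + 1)))
    (hgz : g z = (Real.exp (2 * T) - 1) / (Real.exp (2 * T) + 1)) :
    (∀ p ∈ superdiff (U T) z, p.1 + |z.2| * |p.2| = 0) ∧
    (∀ p ∈ subdiff (U T) z, p.1 + |z.2| * |p.2| = 0) := by
  set k : ℝ := (Real.exp (2 * T) - 1) / (Real.exp (2 * T) + 1) with hk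
  have hUz : U T z = k := by rw [hev.self_of_nhds, hgz, max_self]
  constructor
  · rintro p ⟨φ, hφ, hmax, hp1, hp2⟩
    have hφd : HasFDerivAt φ (fderiv ℝ φ z) z :=
      ((hφ.differentiable one_ne_zero) z).hasFDerivAt
    have heq1 : Lm q1 q2 = fderiv ℝ φ z := by
      refine touch_above hφd hg hmax ?_ (by rw [hgz, hUz])
      filter_upwards [hev] with y hy
      rw [hy]; exact le_max_left _ _
    have heq2 : (0 : ℝ × ℝ →L[ℝ] ℝ) = fderiv ℝ φ z := by
      refine touch_above hφd (hasFDerivAt_const k z) hmax ?_ (by rw [hUz])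
      filter_upwards [hev] with y hy
      rw [hy]; exact le_max_right _ _
    exfalso
    have := congrArg (fun l : ℝ × ℝ →L[ℝ] ℝ => l (0, 1)) (heq1.trans heq2.symm)
    simp only [Lm_apply, ContinuousLinearMap.zero_apply] at this
    apply hq2; linarith
  · rintro p ⟨φ, hφ, hmin, hp1, hp2⟩
    have hφd : HasFDerivAt φ (fderiv ℝ φ z) z :=
      ((hφ.differentiable one_ne_zero) z).hasFDerivAt
    have S := fun v => squeeze_le hφd hg (hasFDerivAt_const k z) hmin hev hgz v
    have ev : ∀ v1 v2 : ℝ, fderiv ℝ φ z (v1, v2) = v1 * p.1 + v2 * p.2 := by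
      intro v1 v2; rw [clm_eval, hp1, hp2]
    have h1 := S (q2, -q1)
    have h2 := S (-q2, q1)
    have h3 := S (-q1, -q2)
    rw [ev, Lm_apply] at h1 h2 h3
    simp only [ContinuousLinearMap.zero_apply] at h1 h2 h3
    have m1 : max (q1 * q2 + q2 * -q1) (0:ℝ) = 0 := by
      rw [show q1 * q2 + q2 * -q1 = 0 by ring, max_self]
    have m2 : max (q1 * -q2 + q2 * q1) (0:ℝ) = 0 := by
      rw [show q1 * -q2 + q2 * q1 = 0 by ring, max_self]
    have m3 : max (q1 * -q1 + q2 * -q2) (0:ℝ) = 0 :=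
      max_eq_right (by nlinarith [sq_nonneg q1, sq_nonneg q2])
    rw [m1] at h1; rw [m2] at h2; rw [m3] at h3
    -- h1 : q2 * p.1 + (-q1) * p.2 ≤ 0, h2 : reverse, h3 : -q1*p.1 - q2*p.2 ≤ 0
    have e12 : q2 * p.1 = q1 * p.2 := by linarith
    rcases lt_or_gt_of_ne hq2 with hneg | hpos
    · have habs : |q2| = -q2 := abs_of_neg hneg
      rw [habs] at hq1
      -- q1 = z.2 * q2
      have hq1' : q1 = z.2 * q2 := by rw [hq1]; ring
      have hp1e : p.1 = z.2 * p.2 := by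
        have : q2 * p.1 = q2 * (z.2 * p.2) := by rw [e12, hq1']; ring
        exact mul_left_cancel₀ hq2 this
      rw [hq1', hp1e] at h3
      have hp2le : p.2 ≤ 0 := by
        by_contra hcon
        push_neg at hcon
        nlinarith [h3, mul_pos (neg_pos.mpr hneg) hcon, sq_nonneg z.2]
      rw [abs_of_nonneg hx, abs_of_nonpos hp2le, hp1e]; ring
    · have habs : |q2| = q2 := abs_of_pos hpos
      rw [habs] at hq1
      have hp1e : p.1 = -(z.2 * p.2) := by
        have : q2 * p.1 = q2 * (-(z.2 * p.2)) := by rw [e12, hq1]; ring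
        exact mul_left_cancel₀ hq2 this
      rw [hq1, hp1e] at h3
      have hp2ge : 0 ≤ p.2 := by
        by_contra hcon
        push_neg at hcon
        nlinarith [h3, mul_pos hpos (neg_pos.mpr hcon), sq_nonneg z.2]
      rw [abs_of_nonneg hx, abs_of_nonneg hp2ge, hp1e]; ring

set_option maxHeartbeats 1000000 in
lemma master (T t x a b c E : ℝ) (ht0 : 0 < t) (htT : t < T) (hx : 0 ≤ x)
    (hadef : a = Real.exp (t - T)) (hbdef : b = Real.exp (T - t))
    (hEdef : E = Real.exp (2 * T)) (hcdef : c = (E - 1) / (E + 1)) :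
    (∀ p ∈ superdiff (U T) (t, x), p.1 + |x| * |p.2| = 0) ∧
    (∀ p ∈ subdiff (U T) (t, x), p.1 + |x| * |p.2| = 0) := by
  have hT : 0 < T := lt_trans ht0 htT
  have hE1 : (1:ℝ) < E := by
    rw [hEdef, show (1:ℝ) = Real.exp 0 from Real.exp_zero.symm]
    exact Real.exp_lt_exp.mpr (by linarith)
  have hEp : (0:ℝ) < E + 1 := by linarith
  have ha : 0 < a := hadef ▸ Real.exp_pos _
  have hb : 0 < b := hbdef ▸ Real.exp_pos _
  have hab : a * b = 1 := by
    rw [hadef, hbdef, ← Real.exp_add, show t - T + (T - t) = 0 by ring, Real.exp_zero]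
  have hba : b * a = 1 := by rw [mul_comm]; exact hab
  have hc0 : 0 < c := by rw [hcdef]; exact div_pos (by linarith) hEp
  have hc1 : c < 1 := by rw [hcdef, div_lt_one hEp]; linarith
  have h1c : (1 - c) * (E + 1) = 2 := by rw [hcdef]; field_simp; ring
  have h1pc : (1 + c) * (E + 1) = 2 * E := by rw [hcdef]; field_simp; ring
  have hb2E : b * b < E := by
    rw [hbdef, hEdef, ← Real.exp_add]
    exact Real.exp_lt_exp.mpr (by linarith)
  have haE : 1 < a * a * E := by
    rw [hadef, hEdef, ← Real.exp_add, ← Real.exp_add,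
      show (1:ℝ) = Real.exp 0 from Real.exp_zero.symm]
    exact Real.exp_lt_exp.mpr (by linarith)
  have hck : (Real.exp (2 * T) - 1) / (Real.exp (2 * T) + 1) = c := by rw [hcdef, hEdef]
  have hA : ∀ y : ℝ × ℝ, U T y =
      max (max (1 - |y.2| * Real.exp (y.1 - T)) (|y.2| * Real.exp (T - y.1) - 1)) c := by
    intro y; rw [U, hck]
  have cf1 : Continuous (fun y : ℝ × ℝ => |y.2| * Real.exp (y.1 - T)) := by fun_prop
  have cf2 : Continuous (fun y : ℝ × ℝ => |y.2| * Real.exp (T - y.1)) := by fun_prop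
  rcases hx.eq_or_lt with hx0 | hx0
  · -- CASE A : x = 0
    subst hx0
    have ev2 : ∀ᶠ y : ℝ × ℝ in nhds (t, 0), |y.2| * Real.exp (y.1 - T) < 1 - c :=
      cf1.continuousAt.eventually_lt continuousAt_const (by simp; linarith)
    have ev3 : ∀ᶠ y : ℝ × ℝ in nhds (t, 0),
        |y.2| * Real.exp (y.1 - T) + |y.2| * Real.exp (T - y.1) < 2 :=
      (cf1.add cf2).continuousAt.eventually_lt continuousAt_const (by simp)
    have hev : ∀ᶠ y : ℝ × ℝ in nhds (t, 0), U T y = 1 - |y.2| * Real.exp (y.1 - T) := by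
      filter_upwards [ev2, ev3] with y h2 h3
      rw [hA y, max_eq_left ((show c ≤ 1 - |y.2| * Real.exp (y.1 - T) by linarith).trans
        (le_max_left _ _)), max_eq_left (by linarith)]
    have hUz : U T (t, 0) = 1 := by
      have := hev.self_of_nhds
      simpa using this
    constructor
    · -- superdiff at x = 0 : p.1 = 0
      rintro p ⟨φ, hφ, hmax, hp1, hp2⟩
      have hφd : HasFDerivAt φ (fderiv ℝ φ (t, 0)) (t, 0) :=
        ((hφ.differentiable one_ne_zero) _).hasFDerivAt
      have hWid : ∀ s : ℝ, max (s - 1) (-s - 1) = |s| - 1 := by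
        intro s
        rcases le_total 0 s with h | h
        · rw [abs_of_nonneg h, max_eq_left (by linarith)]
        · rw [abs_of_nonpos h, max_eq_right (by linarith)]
      have hminW : IsLocalMin (fun y : ℝ × ℝ =>
          max (y.2 * Real.exp (y.1 - T) - 1) (-(y.2 * Real.exp (y.1 - T)) - 1) - -φ y)
          (t, 0) := by
        filter_upwards [hmax, hev] with y h1 h2
        have e1 : max (y.2 * Real.exp (y.1 - T) - 1) (-(y.2 * Real.exp (y.1 - T)) - 1)
            = -(U T y) := by
          rw [hWid, abs_mul, abs_of_pos (Real.exp_pos _), h2]; ring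
        have e2 : max (((t, (0:ℝ)) : ℝ × ℝ).2 * Real.exp (((t, (0:ℝ)) : ℝ × ℝ).1 - T) - 1)
            (-((((t, (0:ℝ)) : ℝ × ℝ)).2 * Real.exp ((((t, (0:ℝ)) : ℝ × ℝ)).1 - T)) - 1)
            = -(U T (t, 0)) := by
          rw [hUz]; norm_num
        simp only [e1, e2]
        have h1' : U T y - φ y ≤ U T (t, 0) - φ (t, 0) := h1
        linarith
      have hd1 : HasFDerivAt (fun y : ℝ × ℝ => y.2 * Real.exp (y.1 - T) - 1)
          (Lm 0 (Real.exp (t - T))) (t, 0) := by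
        have := hG1'_deriv T (t, 0)
        simpa using this
      have hd2 : HasFDerivAt (fun y : ℝ × ℝ => -(y.2 * Real.exp (y.1 - T)) - 1)
          (Lm 0 (-Real.exp (t - T))) (t, 0) := by
        have := hG1''_deriv T (t, 0)
        simpa using this
      have hψ : HasFDerivAt (fun y => -φ y) (-(fderiv ℝ φ (t, 0))) (t, 0) := hφd.neg
      have he : ((t, (0:ℝ)) : ℝ × ℝ).2 * Real.exp (((t, (0:ℝ)) : ℝ × ℝ).1 - T) - 1
          = -(((t, (0:ℝ)) : ℝ × ℝ).2 * Real.exp (((t, (0:ℝ)) : ℝ × ℝ).1 - T)) - 1 := by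
        norm_num
      have S := fun v => squeeze_le hψ hd1 hd2 hminW (Eventually.of_forall fun y => rfl) he v
      have h1 := S (1, 0)
      have h2 := S (-1, 0)
      rw [ContinuousLinearMap.neg_apply, Lm_apply, Lm_apply] at h1 h2
      rw [← hp1] at h1
      have e2 : fderiv ℝ φ (t, 0) (-1, 0) = -p.1 := by
        rw [clm_eval, ← hp1, ← hp2]; ring
      rw [e2] at h2
      norm_num at h1 h2
      have : p.1 = 0 := le_antisymm h2 (by linarith)
      rw [this]
      simp
    · -- subdiff at x = 0 : empty
      rintro p ⟨φ, hφ, hmin, hp1, hp2⟩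
      exfalso
      have hφd : HasFDerivAt φ (fderiv ℝ φ (t, 0)) (t, 0) :=
        ((hφ.differentiable one_ne_zero) _).hasFDerivAt
      have hgp : HasFDerivAt (fun y : ℝ × ℝ => 1 - y.2 * Real.exp (y.1 - T))
          (Lm 0 (-Real.exp (t - T))) (t, 0) := by
        have := hG1_deriv T (t, 0); simpa using this
      have hgm : HasFDerivAt (fun y : ℝ × ℝ => 1 + y.2 * Real.exp (y.1 - T))
          (Lm 0 (Real.exp (t - T))) (t, 0) := by
        have := hG1n_deriv T (t, 0); simpa using this
      have t1 : Lm 0 (-Real.exp (t - T)) = fderiv ℝ φ (t, 0) := by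
        refine touch_below hφd hgp hmin ?_ (by simp [hUz])
        filter_upwards [hev] with y hy
        rw [hy]
        have := le_abs_self y.2
        nlinarith [Real.exp_pos (y.1 - T)]
      have t2 : Lm 0 (Real.exp (t - T)) = fderiv ℝ φ (t, 0) := by
        refine touch_below hφd hgm hmin ?_ (by simp [hUz])
        filter_upwards [hev] with y hy
        rw [hy]
        have := neg_abs_le y.2
        nlinarith [Real.exp_pos (y.1 - T)]
      have := congrArg (fun l : ℝ × ℝ →L[ℝ] ℝ => l (0, 1)) (t1.trans t2.symm)
      simp only [Lm_apply] at this
      have hea : 0 < Real.exp (t - T) := Real.exp_pos _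
      nlinarith [this]
  · -- x > 0
    have ev1 : ∀ᶠ y : ℝ × ℝ in nhds (t, x), (0:ℝ) < y.2 :=
      continuousAt_const.eventually_lt continuous_snd.continuousAt hx0
    rcases lt_trichotomy x ((1 - c) * b) with hxL | hxL | hxL
    · -- CASE B : 0 < x < L, u = 1 - x e^{t-T}
      have kxa : x * a < 1 - c := by
        have h := mul_lt_mul_of_pos_right hxL ha
        have : (1 - c) * b * a = 1 - c := by rw [mul_assoc, hba, mul_one]
        linarith
      have k1 : (1 - c) * (1 + b * b) < 2 := by
        nlinarith [mul_pos (show (0:ℝ) < 1 - c by linarith) (show (0:ℝ) < E - b * b by linarith)]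
      have k2 : x * (a + b) < (1 - c) * b * (a + b) :=
        mul_lt_mul_of_pos_right hxL (by positivity)
      have k3 : (1 - c) * b * (a + b) = (1 - c) * (1 + b * b) := by
        linear_combination (1 - c) * hba
      have ev2 : ∀ᶠ y : ℝ × ℝ in nhds (t, x), |y.2| * Real.exp (y.1 - T) < 1 - c := by
        refine cf1.continuousAt.eventually_lt continuousAt_const ?_
        show |x| * Real.exp (t - T) < 1 - c
        rw [abs_of_pos hx0, ← hadef]; exact kxa
      have ev3 : ∀ᶠ y : ℝ × ℝ in nhds (t, x),
          |y.2| * Real.exp (y.1 - T) + |y.2| * Real.exp (T - y.1) < 2 := by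
        refine (cf1.add cf2).continuousAt.eventually_lt continuousAt_const ?_
        show |x| * Real.exp (t - T) + |x| * Real.exp (T - t) < 2
        rw [abs_of_pos hx0, ← hadef, ← hbdef]; nlinarith [k2, k3, k1]
      have hev : ∀ᶠ y : ℝ × ℝ in nhds (t, x), U T y = 1 - y.2 * Real.exp (y.1 - T) := by
        filter_upwards [ev1, ev2, ev3] with y h1 h2 h3
        rw [hA y, max_eq_left ((show c ≤ 1 - |y.2| * Real.exp (y.1 - T) by linarith).trans
          (le_max_left _ _)), max_eq_left (by linarith), abs_of_pos h1]
      refine branch_case (hG1_deriv T (t, x)) hev ?_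
      show -(x * Real.exp (t - T)) + |x| * |(-Real.exp (t - T))| = 0
      rw [abs_of_pos hx0, abs_neg, abs_of_pos (Real.exp_pos _)]; ring
    · -- CASE C : x = L, kink between g1 and c
      have hxb : x * b < 1 + c := by
        have hh : (1 - c) * (b * b) * (E + 1) < (1 + c) * (E + 1) := by
          rw [h1pc]
          have : (1 - c) * (b * b) * (E + 1) = 2 * (b * b) := by linear_combination (b * b) * h1c
          rw [this]; linarith
        have := (mul_lt_mul_iff_of_pos_right hEp).mp hh
        calc x * b = (1 - c) * b * b := by rw [hxL]
        _ = (1 - c) * (b * b) := by ring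
        _ < 1 + c := this
      have ev2 : ∀ᶠ y : ℝ × ℝ in nhds (t, x), |y.2| * Real.exp (T - y.1) < 1 + c := by
        refine cf2.continuousAt.eventually_lt continuousAt_const ?_
        show |x| * Real.exp (T - t) < 1 + c
        rw [abs_of_pos hx0, ← hbdef]; exact hxb
      have hev : ∀ᶠ y : ℝ × ℝ in nhds (t, x), U T y =
          max (1 - y.2 * Real.exp (y.1 - T)) ((Real.exp (2 * T) - 1) / (Real.exp (2 * T) + 1)) := by
        filter_upwards [ev1, ev2] with y h1 h2
        rw [hA y, max_assoc, max_eq_right (show |y.2| * Real.exp (T - y.1) - 1 ≤ c by linarith),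
          abs_of_pos h1, hck]
      have hgz : 1 - ((t, x) : ℝ × ℝ).2 * Real.exp (((t, x) : ℝ × ℝ).1 - T)
          = (Real.exp (2 * T) - 1) / (Real.exp (2 * T) + 1) := by
        show 1 - x * Real.exp (t - T) = _
        rw [hck, ← hadef, hxL]
        linear_combination (c - 1) * hba
      refine kink_case (hG1_deriv T (t, x)) ?_ (le_of_lt hx0) ?_ hev hgz
      · exact neg_ne_zero.mpr (ne_of_gt (Real.exp_pos _))
      · show -(x * Real.exp (t - T)) = -(x * |(-Real.exp (t - T))|)
        rw [abs_neg, abs_of_pos (Real.exp_pos _)]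
    · rcases lt_trichotomy x ((1 + c) * a) with hxR | hxR | hxR
      · -- CASE D : plateau, u = c
        have kxa : 1 - c < x * a := by
          have h := mul_lt_mul_of_pos_right hxL ha
          have : (1 - c) * b * a = 1 - c := by rw [mul_assoc, hba, mul_one]
          linarith
        have kxb : x * b < 1 + c := by
          have h := mul_lt_mul_of_pos_right hxR hb
          have : (1 + c) * a * b = 1 + c := by rw [mul_assoc, hab, mul_one]
          linarith
        have ev2 : ∀ᶠ y : ℝ × ℝ in nhds (t, x), 1 - c < |y.2| * Real.exp (y.1 - T) := by
          refine continuousAt_const.eventually_lt cf1.continuousAt ?_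
          show 1 - c < |x| * Real.exp (t - T)
          rw [abs_of_pos hx0, ← hadef]; exact kxa
        have ev3 : ∀ᶠ y : ℝ × ℝ in nhds (t, x), |y.2| * Real.exp (T - y.1) < 1 + c := by
          refine cf2.continuousAt.eventually_lt continuousAt_const ?_
          show |x| * Real.exp (T - t) < 1 + c
          rw [abs_of_pos hx0, ← hbdef]; exact kxb
        have hev : ∀ᶠ y : ℝ × ℝ in nhds (t, x),
            U T y = (Real.exp (2 * T) - 1) / (Real.exp (2 * T) + 1) := by
          filter_upwards [ev2, ev3] with y h2 h3
          rw [hA y, max_eq_right (max_le (by linarith) (by linarith)), hck]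
        have hg : HasFDerivAt (fun _ : ℝ × ℝ => (Real.exp (2 * T) - 1) / (Real.exp (2 * T) + 1))
            (Lm 0 0) (t, x) := by
          rw [Lm_zero]; exact hasFDerivAt_const _ _
        refine branch_case hg hev ?_
        show (0:ℝ) + |x| * |(0:ℝ)| = 0
        simp
      · -- CASE E : x = R, kink between g2 and c
        have kxa : 1 - c < x * a := by
          have hh : (1 - c) * (E + 1) < (1 + c) * (a * a) * (E + 1) := by
            rw [h1c]
            have : (1 + c) * (a * a) * (E + 1) = 2 * (E * (a * a)) := by
              linear_combination (a * a) * h1pc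
            rw [this]; nlinarith [haE]
          have := (mul_lt_mul_iff_of_pos_right hEp).mp hh
          calc 1 - c < (1 + c) * (a * a) := this
          _ = (1 + c) * a * a := by ring
          _ = x * a := by rw [hxR]
        have ev2 : ∀ᶠ y : ℝ × ℝ in nhds (t, x), 1 - c < |y.2| * Real.exp (y.1 - T) := by
          refine continuousAt_const.eventually_lt cf1.continuousAt ?_
          show 1 - c < |x| * Real.exp (t - T)
          rw [abs_of_pos hx0, ← hadef]; exact kxa
        have hev : ∀ᶠ y : ℝ × ℝ in nhds (t, x), U T y =
            max (y.2 * Real.exp (T - y.1) - 1)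
              ((Real.exp (2 * T) - 1) / (Real.exp (2 * T) + 1)) := by
          filter_upwards [ev1, ev2] with y h1 h2
          rw [hA y, max_comm (1 - |y.2| * Real.exp (y.1 - T)) (|y.2| * Real.exp (T - y.1) - 1),
            max_assoc, max_eq_right (show 1 - |y.2| * Real.exp (y.1 - T) ≤ c by linarith),
            abs_of_pos h1, hck]
        have hgz : ((t, x) : ℝ × ℝ).2 * Real.exp (T - ((t, x) : ℝ × ℝ).1) - 1
            = (Real.exp (2 * T) - 1) / (Real.exp (2 * T) + 1) := by
          show x * Real.exp (T - t) - 1 = _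
          rw [hck, ← hbdef, hxR]
          linear_combination (1 + c) * hab
        refine kink_case (hG2_deriv T (t, x)) ?_ (le_of_lt hx0) ?_ hev hgz
        · exact ne_of_gt (Real.exp_pos _)
        · show -(x * Real.exp (T - t)) = -(x * |Real.exp (T - t)|)
          rw [abs_of_pos (Real.exp_pos _)]
      · -- CASE F : x > R, u = x e^{T-t} - 1
        have kxb : 1 + c < x * b := by
          have h := mul_lt_mul_of_pos_right hxR hb
          have : (1 + c) * a * b = 1 + c := by rw [mul_assoc, hab, mul_one]
          linarith
        have k1 : 2 < (1 + c) * (1 + a * a) := by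
          nlinarith [mul_pos (show (0:ℝ) < 1 + c by linarith)
            (show (0:ℝ) < a * a * E - 1 by linarith), h1pc, hEp]
        have k2 : (1 + c) * a * (a + b) < x * (a + b) :=
          mul_lt_mul_of_pos_right hxR (by positivity)
        have k3 : (1 + c) * a * (a + b) = (1 + c) * (1 + a * a) := by
          linear_combination (1 + c) * hab
        have ev2 : ∀ᶠ y : ℝ × ℝ in nhds (t, x), 1 + c < |y.2| * Real.exp (T - y.1) := by
          refine continuousAt_const.eventually_lt cf2.continuousAt ?_
          show 1 + c < |x| * Real.exp (T - t)
          rw [abs_of_pos hx0, ← hbdef]; exact kxb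
        have ev3 : ∀ᶠ y : ℝ × ℝ in nhds (t, x),
            2 < |y.2| * Real.exp (y.1 - T) + |y.2| * Real.exp (T - y.1) := by
          refine continuousAt_const.eventually_lt (cf1.add cf2).continuousAt ?_
          show 2 < |x| * Real.exp (t - T) + |x| * Real.exp (T - t)
          rw [abs_of_pos hx0, ← hadef, ← hbdef]; nlinarith [k1, k2, k3]
        have hev : ∀ᶠ y : ℝ × ℝ in nhds (t, x), U T y = y.2 * Real.exp (T - y.1) - 1 := by
          filter_upwards [ev1, ev2, ev3] with y h1 h2 h3
          rw [hA y, max_eq_left ((show c ≤ |y.2| * Real.exp (T - y.1) - 1 by linarith).trans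
            (le_max_right _ _)), max_eq_right (show 1 - |y.2| * Real.exp (y.1 - T) ≤
            |y.2| * Real.exp (T - y.1) - 1 by linarith), abs_of_pos h1]
        refine branch_case (hG2_deriv T (t, x)) hev ?_
        show -(x * Real.exp (T - t)) + |x| * |Real.exp (T - t)| = 0
        rw [abs_of_pos hx0, abs_of_pos (Real.exp_pos _)]; ring

lemma master' (T : ℝ) {t x : ℝ} (ht : t ∈ Ioo 0 T) :
    (∀ p ∈ superdiff (U T) (t, x), p.1 + |x| * |p.2| = 0) ∧
    (∀ p ∈ subdiff (U T) (t, x), p.1 + |x| * |p.2| = 0) := by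
  have hsym : ∀ y : ℝ × ℝ, U T (y.1, -y.2) = U T y := by
    intro y; simp [U]
  rcases le_or_gt 0 x with hx | hx
  · exact master T t x _ _ _ _ ht.1 ht.2 hx rfl rfl rfl rfl
  · have hm := master T t (-x) _ _ _ _ ht.1 ht.2 (by linarith) rfl rfl rfl rfl
    constructor
    · intro p hp
      have h2 := superdiff_reflect hsym hp
      have h3 := hm.1 _ h2
      simp only [abs_neg] at h3
      simpa using h3
    · intro p hp
      have h2 := subdiff_reflect hsym hp
      have h3 := hm.2 _ h2
      simp only [abs_neg] at h3
      simpa using h3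

lemma pnorm (s u : ℝ) : ‖((s, u) : ℝ × ℝ)‖ = max |s| |u| := by
  simp [Prod.norm_def, Real.norm_eq_abs]

set_option maxHeartbeats 1000000 in
lemma not_semiconvex_aux (T A B c E : ℝ) (hT : 0 < T)
    (hAdef : A = Real.exp (T / 2 - T)) (hBdef : B = Real.exp (T - T / 2))
    (hEdef : E = Real.exp (2 * T)) (hcdef : c = (E - 1) / (E + 1)) :
    ¬ SemiconvexOn (Icc 0 T ×ˢ univ) (U T) := by
  rintro ⟨C, hC⟩
  have hE1 : (1:ℝ) < E := by
    rw [hEdef, show (1:ℝ) = Real.exp 0 from Real.exp_zero.symm]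
    exact Real.exp_lt_exp.mpr (by linarith)
  have hEp : (0:ℝ) < E + 1 := by linarith
  have hA : 0 < A := hAdef ▸ Real.exp_pos _
  have hB : 0 < B := hBdef ▸ Real.exp_pos _
  have hAB : A * B = 1 := by
    rw [hAdef, hBdef, ← Real.exp_add, show T / 2 - T + (T - T / 2) = 0 by ring, Real.exp_zero]
  have hABsum : 2 ≤ A + B := by nlinarith [sq_nonneg (A - 1), hAB, hA]
  have hc0 : 0 < c := by rw [hcdef]; exact div_pos (by linarith) hEp
  have hc1 : c < 1 := by rw [hcdef, div_lt_one hEp]; linarith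
  set h : ℝ := min (1 - c) T / (A + B) with hdef
  have hABp : (0:ℝ) < A + B := by linarith
  have hh0 : 0 < h := div_pos (lt_min (by linarith) hT) hABp
  have hclear : h * (A + B) = min (1 - c) T := by rw [hdef]; field_simp
  have hhT : h ≤ T / 2 := by
    calc h = min (1 - c) T / (A + B) := hdef
    _ ≤ T / (A + B) := by gcongr; exact min_le_right _ _
    _ ≤ T / 2 := div_le_div_of_nonneg_left hT.le (by norm_num) hABsum
  have haA : h * A ≤ 1 - c := by
    have h1 : h * A ≤ h * (A + B) := by nlinarith [hh0.le, hB.le]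
    have h2 : min (1 - c) T ≤ 1 - c := min_le_left _ _
    linarith [hclear]
  have hsum : h * (A + B) ≤ 2 := by
    rw [hclear]; exact (min_le_left _ _).trans (by linarith)
  have hA0 : ∀ y : ℝ × ℝ, U T y =
      max (max (1 - |y.2| * Real.exp (y.1 - T)) (|y.2| * Real.exp (T - y.1) - 1)) c := by
    intro y; rw [U, hcdef, hEdef]
  have hU0 : U T (T / 2, 0) = 1 := by
    rw [hA0]
    have p1 : ((T / 2 : ℝ), (0:ℝ)).1 = T / 2 := rfl
    have p2 : ((T / 2 : ℝ), (0:ℝ)).2 = 0 := rfl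
    rw [p1, p2, abs_zero, zero_mul, zero_mul]
    rw [max_eq_left (by norm_num : (0:ℝ) - 1 ≤ 1 - 0), max_eq_left (by linarith)]
    norm_num
  have hUp : U T (T / 2, h) = 1 - h * A := by
    rw [hA0]
    have p1 : ((T / 2 : ℝ), h).1 = T / 2 := rfl
    have p2 : ((T / 2 : ℝ), h).2 = h := rfl
    rw [p1, p2, abs_of_pos hh0, ← hAdef, ← hBdef]
    rw [max_eq_left ((show c ≤ 1 - h * A by linarith).trans (le_max_left _ _)),
      max_eq_left (by nlinarith [hsum])]
  have hUm : U T (T / 2, -h) = 1 - h * A := by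
    rw [hA0]
    have p1 : ((T / 2 : ℝ), -h).1 = T / 2 := rfl
    have p2 : ((T / 2 : ℝ), -h).2 = -h := rfl
    rw [p1, p2, abs_neg, abs_of_pos hh0, ← hAdef, ← hBdef]
    rw [max_eq_left ((show c ≤ 1 - h * A by linarith).trans (le_max_left _ _)),
      max_eq_left (by nlinarith [hsum])]
  have hn0 : ‖((T / 2 : ℝ), (0:ℝ))‖ = T / 2 := by
    rw [pnorm, abs_zero, abs_of_pos (by linarith : (0:ℝ) < T / 2)]
    exact max_eq_left (by linarith)
  have hnp : ‖((T / 2 : ℝ), h)‖ = T / 2 := by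
    rw [pnorm, abs_of_pos hh0, abs_of_pos (by linarith : (0:ℝ) < T / 2)]
    exact max_eq_left hhT
  have hnm : ‖((T / 2 : ℝ), -h)‖ = T / 2 := by
    rw [pnorm, abs_neg, abs_of_pos hh0, abs_of_pos (by linarith : (0:ℝ) < T / 2)]
    exact max_eq_left hhT
  have mem1 : (((T / 2 : ℝ), -h) : ℝ × ℝ) ∈ Icc (0:ℝ) T ×ˢ (univ : Set ℝ) :=
    mem_prod.mpr ⟨⟨by linarith, by linarith⟩, mem_univ _⟩
  have mem2 : (((T / 2 : ℝ), h) : ℝ × ℝ) ∈ Icc (0:ℝ) T ×ˢ (univ : Set ℝ) :=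
    mem_prod.mpr ⟨⟨by linarith, by linarith⟩, mem_univ _⟩
  have key := hC.2 mem1 mem2 (by norm_num : (0:ℝ) ≤ 1/2) (by norm_num : (0:ℝ) ≤ 1/2)
    (by norm_num : (1:ℝ)/2 + 1/2 = 1)
  have hmid : ((1:ℝ)/2) • (((T / 2 : ℝ), -h) : ℝ × ℝ) + ((1:ℝ)/2) • (((T / 2 : ℝ), h) : ℝ × ℝ)
      = (((T / 2 : ℝ), (0:ℝ)) : ℝ × ℝ) := by
    simp [Prod.ext_iff]; ring
  rw [hmid] at key
  simp only [smul_eq_mul] at key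
  rw [hU0, hUp, hUm, hn0, hnp, hnm] at key
  nlinarith [mul_pos hh0 hA, key]

set_option maxHeartbeats 1000000 in
lemma not_semiconcave_aux (T t₀ x₀ a b c E : ℝ) (ht₀0 : 0 < t₀) (ht₀T : t₀ < T)
    (hadef : a = Real.exp (t₀ - T)) (hbdef : b = Real.exp (T - t₀))
    (hEdef : E = Real.exp (2 * T)) (hcdef : c = (E - 1) / (E + 1))
    (hxdef : x₀ = (1 - c) * b) (ht₀E : t₀ * (E + 1) ≤ 1) :
    ¬ SemiconcaveOn (Icc 0 T ×ˢ univ) (U T) := by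
  rintro ⟨C, hC⟩
  have hT : 0 < T := lt_trans ht₀0 ht₀T
  have hE1 : (1:ℝ) < E := by
    rw [hEdef, show (1:ℝ) = Real.exp 0 from Real.exp_zero.symm]
    exact Real.exp_lt_exp.mpr (by linarith)
  have hEp : (0:ℝ) < E + 1 := by linarith
  have ha : 0 < a := hadef ▸ Real.exp_pos _
  have hb : 0 < b := hbdef ▸ Real.exp_pos _
  have hab : a * b = 1 := by
    rw [hadef, hbdef, ← Real.exp_add, show t₀ - T + (T - t₀) = 0 by ring, Real.exp_zero]
  have hba : b * a = 1 := by rw [mul_comm]; exact hab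
  have hb1 : 1 ≤ b := by
    rw [hbdef, show (1:ℝ) = Real.exp 0 from Real.exp_zero.symm]
    exact Real.exp_le_exp.mpr (by linarith)
  have hc0 : 0 < c := by rw [hcdef]; exact div_pos (by linarith) hEp
  have hc1 : c < 1 := by rw [hcdef, div_lt_one hEp]; linarith
  have h1c : (1 - c) * (E + 1) = 2 := by rw [hcdef]; field_simp; ring
  have h1pc : (1 + c) * (E + 1) = 2 * E := by rw [hcdef]; field_simp; ring
  have hb2E : b * b < E := by
    rw [hbdef, hEdef, ← Real.exp_add]
    exact Real.exp_lt_exp.mpr (by linarith)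
  -- δ > 0
  have hδpos : (1 - c) * (b * b) < 1 + c := by
    have hh : (1 - c) * (b * b) * (E + 1) < (1 + c) * (E + 1) := by
      rw [h1pc]
      have e : (1 - c) * (b * b) * (E + 1) = 2 * (b * b) := by linear_combination (b * b) * h1c
      rw [e]; linarith
    exact (mul_lt_mul_iff_of_pos_right hEp).mp hh
  have ht₀x : t₀ < x₀ := by
    have k1 : t₀ < 1 - c := by nlinarith [h1c, ht₀E, hEp]
    nlinarith [hxdef, hb1, hc1]
  have e_xa : x₀ * a = 1 - c := by rw [hxdef]; linear_combination (1 - c) * hba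
  have e_xb : x₀ * b = (1 - c) * (b * b) := by rw [hxdef]; ring
  have hCp : (0:ℝ) < 4 * (|C| + 1) := by positivity
  obtain ⟨h, hh0, hhδ, hhx, h4⟩ : ∃ h : ℝ, 0 < h ∧
      h * b ≤ (1 + c) - (1 - c) * (b * b) ∧ h ≤ (x₀ - t₀) / 2 ∧ h * (4 * (|C| + 1)) ≤ a := by
    refine ⟨min (min (((1 + c) - (1 - c) * (b * b)) / b) ((x₀ - t₀) / 2))
      (a / (4 * (|C| + 1))), ?_, ?_, ?_, ?_⟩
    · apply lt_min (lt_min _ _) _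
      · exact div_pos (by linarith) hb
      · exact div_pos (by linarith) (by norm_num)
      · exact div_pos ha hCp
    · have h1 : min (min (((1 + c) - (1 - c) * (b * b)) / b) ((x₀ - t₀) / 2))
          (a / (4 * (|C| + 1))) ≤ (((1 + c) - (1 - c) * (b * b)) / b) :=
        (min_le_left _ _).trans (min_le_left _ _)
      exact (le_div_iff₀ hb).mp h1
    · exact (min_le_left _ _).trans (min_le_right _ _)
    · exact (le_div_iff₀ hCp).mp (min_le_right _ _)
  have hxh0 : 0 < x₀ - h := by linarith
  have hA0 : ∀ y : ℝ × ℝ, U T y =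
      max (max (1 - |y.2| * Real.exp (y.1 - T)) (|y.2| * Real.exp (T - y.1) - 1)) c := by
    intro y; rw [U, hcdef, hEdef]
  have hUm : U T (t₀, x₀ - h) = c + h * a := by
    have c1 : c ≤ 1 - (x₀ - h) * a := by
      nlinarith [e_xa, mul_nonneg hh0.le ha.le]
    have c2 : (x₀ - h) * Real.exp (T - t₀) - 1 ≤ 1 - (x₀ - h) * a := by
      rw [← hbdef]
      nlinarith [e_xa, e_xb, hδpos, mul_nonneg hh0.le ha.le, mul_nonneg hh0.le hb.le]
    rw [hA0]
    have p1 : ((t₀ : ℝ), x₀ - h).1 = t₀ := rfl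
    have p2 : ((t₀ : ℝ), x₀ - h).2 = x₀ - h := rfl
    rw [p1, p2, abs_of_pos hxh0, ← hadef]
    rw [max_eq_left (c1.trans (le_max_left _ _)), max_eq_left c2]
    linarith [e_xa]
  have hUp : U T (t₀, x₀ + h) = c := by
    rw [hA0]
    have p1 : ((t₀ : ℝ), x₀ + h).1 = t₀ := rfl
    have p2 : ((t₀ : ℝ), x₀ + h).2 = x₀ + h := rfl
    have c1 : 1 - (x₀ + h) * Real.exp (t₀ - T) ≤ c := by
      rw [← hadef]; nlinarith [e_xa, mul_nonneg hh0.le ha.le]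
    have c2 : (x₀ + h) * Real.exp (T - t₀) - 1 ≤ c := by
      rw [← hbdef]; nlinarith [e_xb, hδpos, hhδ, mul_nonneg hh0.le hb.le]
    rw [p1, p2, abs_of_pos (by linarith : (0:ℝ) < x₀ + h)]
    rw [max_eq_right (max_le c1 c2)]
  have hU0 : U T (t₀, x₀) = c := by
    rw [hA0]
    have p1 : ((t₀ : ℝ), x₀).1 = t₀ := rfl
    have p2 : ((t₀ : ℝ), x₀).2 = x₀ := rfl
    have c1 : 1 - x₀ * Real.exp (t₀ - T) ≤ c := by rw [← hadef]; nlinarith [e_xa]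
    have c2 : x₀ * Real.exp (T - t₀) - 1 ≤ c := by rw [← hbdef]; nlinarith [e_xb, hδpos]
    rw [p1, p2, abs_of_pos (by linarith : (0:ℝ) < x₀)]
    rw [max_eq_right (max_le c1 c2)]
  have hnm : ‖((t₀ : ℝ), x₀ - h)‖ = x₀ - h := by
    rw [pnorm, abs_of_pos ht₀0, abs_of_pos hxh0]
    exact max_eq_right (by linarith)
  have hnp : ‖((t₀ : ℝ), x₀ + h)‖ = x₀ + h := by
    rw [pnorm, abs_of_pos ht₀0, abs_of_pos (by linarith : (0:ℝ) < x₀ + h)]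
    exact max_eq_right (by linarith)
  have hn0 : ‖((t₀ : ℝ), x₀)‖ = x₀ := by
    rw [pnorm, abs_of_pos ht₀0, abs_of_pos (by linarith : (0:ℝ) < x₀)]
    exact max_eq_right (by linarith)
  have mem1 : (((t₀ : ℝ), x₀ - h) : ℝ × ℝ) ∈ Icc (0:ℝ) T ×ˢ (univ : Set ℝ) :=
    mem_prod.mpr ⟨⟨by linarith, by linarith⟩, mem_univ _⟩
  have mem2 : (((t₀ : ℝ), x₀ + h) : ℝ × ℝ) ∈ Icc (0:ℝ) T ×ˢ (univ : Set ℝ) :=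
    mem_prod.mpr ⟨⟨by linarith, by linarith⟩, mem_univ _⟩
  have key := hC.2 mem1 mem2 (by norm_num : (0:ℝ) ≤ 1/2) (by norm_num : (0:ℝ) ≤ 1/2)
    (by norm_num : (1:ℝ)/2 + 1/2 = 1)
  have hmid : ((1:ℝ)/2) • (((t₀ : ℝ), x₀ - h) : ℝ × ℝ) + ((1:ℝ)/2) • (((t₀ : ℝ), x₀ + h) : ℝ × ℝ)
      = (((t₀ : ℝ), x₀) : ℝ × ℝ) := by
    rw [Prod.smul_mk, Prod.smul_mk, Prod.mk_add_mk, Prod.mk.injEq]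
    refine ⟨?_, ?_⟩ <;> (simp only [smul_eq_mul]; ring)
  rw [hmid] at key
  simp only [smul_eq_mul] at key
  rw [hU0, hUp, hUm, hn0, hnp, hnm] at key
  -- key : 1/2 * (c + h*a - C*(x₀-h)^2) + 1/2 * (c - C*(x₀+h)^2) ≤ c - C*x₀^2
  have hcontra : h * a ≤ 2 * C * h ^ 2 := by nlinarith [key]
  nlinarith [hcontra, mul_le_mul_of_nonneg_right h4 hh0.le, le_abs_self C, abs_nonneg C,
    mul_pos hh0 hh0]

/-- Example 1.4: `u(t,x) = max{1 − |x|e^{t−T}, |x|e^{T−t} − 1, (e^{2T}−1)/(e^{2T}+1)}`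
is a bilateral (forward and backward) viscosity solution of `uₜ + |x||uₓ| = 0` on
`(0,T) × ℝ`, and is neither semiconvex nor semiconcave on `[0,T] × ℝ`. -/
theorem stmt_13 (T : ℝ) (hT : 0 < T) :
    IsForwardViscSol (fun x p => |x| * |p|) T
      (fun z => max (max (1 - |z.2| * Real.exp (z.1 - T)) (|z.2| * Real.exp (T - z.1) - 1))
        ((Real.exp (2 * T) - 1) / (Real.exp (2 * T) + 1))) ∧
    IsBackwardViscSol (fun x p => |x| * |p|) T
      (fun z => max (max (1 - |z.2| * Real.exp (z.1 - T)) (|z.2| * Real.exp (T - z.1) - 1))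
        ((Real.exp (2 * T) - 1) / (Real.exp (2 * T) + 1))) ∧
    ¬ SemiconvexOn (Set.Icc 0 T ×ˢ Set.univ)
      (fun z => max (max (1 - |z.2| * Real.exp (z.1 - T)) (|z.2| * Real.exp (T - z.1) - 1))
        ((Real.exp (2 * T) - 1) / (Real.exp (2 * T) + 1))) ∧
    ¬ SemiconcaveOn (Set.Icc 0 T ×ˢ Set.univ)
      (fun z => max (max (1 - |z.2| * Real.exp (z.1 - T)) (|z.2| * Real.exp (T - z.1) - 1))
        ((Real.exp (2 * T) - 1) / (Real.exp (2 * T) + 1))) := by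
  have hcont : Continuous (U T) := by
    unfold U; fun_prop
  have hE1 : (1:ℝ) < Real.exp (2 * T) := by
    rw [show (1:ℝ) = Real.exp 0 from Real.exp_zero.symm]
    exact Real.exp_lt_exp.mpr (by linarith)
  have hEp : (0:ℝ) < Real.exp (2 * T) + 1 := by linarith
  refine ⟨⟨hcont, fun t x ht => ?_⟩, ⟨hcont, fun t x ht => ?_⟩, ?_, ?_⟩
  · exact ⟨fun p hp => le_of_eq ((master' T ht).1 p hp),
      fun p hp => ge_of_eq ((master' T ht).2 p hp)⟩
  · exact ⟨fun p hp => ge_of_eq ((master' T ht).1 p hp),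
      fun p hp => le_of_eq ((master' T ht).2 p hp)⟩
  · exact not_semiconvex_aux T _ _ _ _ hT rfl rfl rfl rfl
  · -- choose t₀ = min (T/2) (1/(E+1))
    have ht₀0 : 0 < min (T / 2) (1 / (Real.exp (2 * T) + 1)) :=
      lt_min (by linarith) (by positivity)
    have ht₀T : min (T / 2) (1 / (Real.exp (2 * T) + 1)) < T :=
      lt_of_le_of_lt (min_le_left _ _) (by linarith)
    have ht₀E : min (T / 2) (1 / (Real.exp (2 * T) + 1)) * (Real.exp (2 * T) + 1) ≤ 1 := by
      have := min_le_right (T / 2) (1 / (Real.exp (2 * T) + 1))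
      calc min (T / 2) (1 / (Real.exp (2 * T) + 1)) * (Real.exp (2 * T) + 1)
          ≤ (1 / (Real.exp (2 * T) + 1)) * (Real.exp (2 * T) + 1) :=
            mul_le_mul_of_nonneg_right this hEp.le
      _ = 1 := by field_simp
    exact not_semiconcave_aux T _ _ _ _ _ _ ht₀0 ht₀T rfl rfl rfl rfl rfl ht₀E
end

section
/- Non-reconstructibility for T > 1: let u(t,x) = min{0, −|x| + 1 − t} on [0,T] × ℝ and w(t,x) = min{0, 1 − T, −|x| + 1 − t}. Then u is a forward viscosity solution of uₜ + |uₓ| = 0, w is a backward viscosity solution of the same equation with w(T,·) = u(T,·), u = w on [0,T] × ℝ when T ≤ 1, and if T > 1 then w(0,0) = 1 − T ≠ 0 = u(0,0). -/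
open Set Filter Topology

lemma dir_deriv {φ : ℝ × ℝ → ℝ} (hφ : ContDiff ℝ 1 φ) (z v : ℝ × ℝ) :
    HasDerivAt (fun s : ℝ => φ (z + s • v)) (fderiv ℝ φ z v) 0 := by
  have hdφ : HasFDerivAt φ (fderiv ℝ φ z) (z + (0:ℝ) • v) := by
    simpa using (hφ.differentiable one_ne_zero z).hasFDerivAt
  have hcurve : HasDerivAt (fun s : ℝ => z + s • v) v 0 := by
    simpa using ((hasDerivAt_id (0:ℝ)).smul_const v).const_add z
  exact hdφ.comp_hasDerivAt 0 hcurve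

lemma fderiv_pair {φ : ℝ × ℝ → ℝ} (z v : ℝ × ℝ) :
    fderiv ℝ φ z v = v.1 * fderiv ℝ φ z (1, 0) + v.2 * fderiv ℝ φ z (0, 1) := by
  have hv : v = v.1 • ((1:ℝ), (0:ℝ)) + v.2 • ((0:ℝ), (1:ℝ)) := by
    simp [Prod.ext_iff]
  conv_lhs => rw [hv]
  rw [map_add, map_smul, map_smul]
  simp [smul_eq_mul]

lemma slope_tendsto {φ : ℝ × ℝ → ℝ} (hφ : ContDiff ℝ 1 φ) (z v : ℝ × ℝ) :
    Tendsto (slope (fun s : ℝ => φ (z + s • v)) 0) (𝓝[>] (0:ℝ))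
      (𝓝 (fderiv ℝ φ z v)) :=
  (hasDerivAt_iff_tendsto_slope.mp (dir_deriv hφ z v)).mono_left
    (nhdsWithin_mono 0 (fun s hs => ne_of_gt hs))

lemma superdiff_dir {u : ℝ × ℝ → ℝ} {z p : ℝ × ℝ} (hp : p ∈ superdiff u z)
    (v : ℝ × ℝ) (c : ℝ)
    (h : ∀ᶠ s in 𝓝[>] (0:ℝ), u z + s * c ≤ u (z + s • v)) :
    c ≤ p.1 * v.1 + p.2 * v.2 := by
  obtain ⟨φ, hφ, hmax, hp1, hp2⟩ := hp
  have hf : fderiv ℝ φ z v = p.1 * v.1 + p.2 * v.2 := by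
    rw [fderiv_pair z v, hp1, hp2]; ring
  have hcurve : Tendsto (fun s : ℝ => z + s • v) (𝓝[>] (0:ℝ)) (𝓝 z) := by
    have hc : Continuous (fun s : ℝ => z + s • v) := by continuity
    have := (hc.tendsto 0).mono_left (nhdsWithin_le_nhds (s := Ioi (0:ℝ)))
    simpa using this
  have hmax' : ∀ᶠ s in 𝓝[>] (0:ℝ),
      u (z + s • v) - φ (z + s • v) ≤ u z - φ z := hcurve.eventually hmax
  have hev : ∀ᶠ s in 𝓝[>] (0:ℝ),
      c ≤ slope (fun s : ℝ => φ (z + s • v)) 0 s := by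
    filter_upwards [h, hmax', self_mem_nhdsWithin] with s h1 h2 hs
    have hs' : (0:ℝ) < s := hs
    rw [slope_def_field, le_div_iff₀ (by linarith : (0:ℝ) < s - 0)]
    have h0 : φ (z + (0:ℝ) • v) = φ z := by simp
    nlinarith [h1, h2]
  have := ge_of_tendsto (slope_tendsto hφ z v) hev
  linarith [hf ▸ this]

lemma subdiff_dir {u : ℝ × ℝ → ℝ} {z p : ℝ × ℝ} (hp : p ∈ subdiff u z)
    (v : ℝ × ℝ) (c : ℝ)
    (h : ∀ᶠ s in 𝓝[>] (0:ℝ), u (z + s • v) ≤ u z + s * c) :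
    p.1 * v.1 + p.2 * v.2 ≤ c := by
  obtain ⟨φ, hφ, hmin, hp1, hp2⟩ := hp
  have hf : fderiv ℝ φ z v = p.1 * v.1 + p.2 * v.2 := by
    rw [fderiv_pair z v, hp1, hp2]; ring
  have hcurve : Tendsto (fun s : ℝ => z + s • v) (𝓝[>] (0:ℝ)) (𝓝 z) := by
    have hc : Continuous (fun s : ℝ => z + s • v) := by continuity
    have := (hc.tendsto 0).mono_left (nhdsWithin_le_nhds (s := Ioi (0:ℝ)))
    simpa using this
  have hmin' : ∀ᶠ s in 𝓝[>] (0:ℝ),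
      u z - φ z ≤ u (z + s • v) - φ (z + s • v) := hcurve.eventually hmin
  have hev : ∀ᶠ s in 𝓝[>] (0:ℝ),
      slope (fun s : ℝ => φ (z + s • v)) 0 s ≤ c := by
    filter_upwards [h, hmin', self_mem_nhdsWithin] with s h1 h2 hs
    have hs' : (0:ℝ) < s := hs
    rw [slope_def_field, div_le_iff₀ (by linarith : (0:ℝ) < s - 0)]
    have h0 : φ (z + (0:ℝ) • v) = φ z := by simp
    nlinarith [h1, h2]
  have := le_of_tendsto (slope_tendsto hφ z v) hev
  linarith [hf ▸ this]

/-- Example 1.7: `u(t,x) = min{0, −|x| + 1 − t}` is a forward viscosity solution of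
`uₜ + |uₓ| = 0`, `w(t,x) = min{0, 1 − T, −|x| + 1 − t}` is a backward viscosity
solution with `w(T,·) = u(T,·)`; `u = w` on `[0,T] × ℝ` when `T ≤ 1`, while for
`T > 1` one has `w(0,0) = 1 − T ≠ 0 = u(0,0)`. -/
theorem stmt_14 (T : ℝ) (hT : 0 < T) :
    IsForwardViscSol (fun _ p => |p|) T (fun z => min 0 (-|z.2| + 1 - z.1)) ∧
    IsBackwardViscSol (fun _ p => |p|) T (fun z => min (min 0 (1 - T)) (-|z.2| + 1 - z.1)) ∧
    (∀ x : ℝ, min (min (0 : ℝ) (1 - T)) (-|x| + 1 - T) = min 0 (-|x| + 1 - T)) ∧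
    (T ≤ 1 → ∀ t x : ℝ, t ∈ Set.Icc 0 T →
      min (0 : ℝ) (-|x| + 1 - t) = min (min 0 (1 - T)) (-|x| + 1 - t)) ∧
    (1 < T → min (min (0 : ℝ) (1 - T)) (-|(0 : ℝ)| + 1 - 0) = 1 - T ∧
      min (0 : ℝ) (-|(0 : ℝ)| + 1 - 0) = 0 ∧ (1 - T : ℝ) ≠ 0) := by
  refine ⟨⟨by fun_prop, fun t x ht => ⟨?_, ?_⟩⟩, ⟨by fun_prop, fun t x ht => ⟨?_, ?_⟩⟩,
    ?_, ?_, ?_⟩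
  · -- forward, superdiff : p.1 + |p.2| ≤ 0
    intro p hp
    show p.1 + |p.2| ≤ 0
    have key : ∀ e : ℝ, |e| = 1 → (0:ℝ) ≤ p.1 * (-1) + p.2 * e := by
      intro e he
      refine superdiff_dir hp (-1, e) 0 ?_
      filter_upwards [self_mem_nhdsWithin] with s hs
      have hs' : (0:ℝ) < s := hs
      simp only [Prod.smul_mk, Prod.mk_add_mk, smul_eq_mul, mul_one, mul_zero, add_zero]
      have habs : |x + s * e| ≤ |x| + s := by
        calc |x + s * e| ≤ |x| + |s * e| := abs_add_le x (s * e)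
        _ = |x| + s := by rw [abs_mul, he, abs_of_pos hs']; ring
      have h2 : (-|x| + 1 - t) ≤ (-|x + s * e| + 1 - (t + s * (-1))) := by linarith
      have := min_le_min (le_refl (0:ℝ)) h2
      simpa using this
    have h1 := key 1 (by norm_num)
    have h2 := key (-1) (by norm_num)
    rcases abs_cases p.2 with ⟨h, _⟩ | ⟨h, _⟩ <;> linarith
  · -- forward, subdiff : 0 ≤ p.1 + |p.2|
    intro p hp
    show 0 ≤ p.1 + |p.2|
    by_cases h0 : 0 ≤ -|x| + 1 - t
    · -- u z = 0 ; direction (-1,0)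
      have hz : min (0:ℝ) (-|x| + 1 - t) = 0 := min_eq_left h0
      have h1 : p.1 * (-1) + p.2 * 0 ≤ 0 := by
        refine subdiff_dir hp (-1, 0) 0 ?_
        filter_upwards [self_mem_nhdsWithin] with s hs
        simp only [Prod.smul_mk, Prod.mk_add_mk, smul_eq_mul, mul_zero, add_zero]
        have : min (0:ℝ) (-|x + 0| + 1 - (t + s * (-1))) ≤ 0 := min_le_left _ _
        simpa [hz] using this
      have := abs_nonneg p.2
      linarith
    · push_neg at h0
      rcases lt_trichotomy x 0 with hx | hx | hx
      · -- x < 0 : direction (-1,-1), exact equality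
        have h1 : p.1 * (-1) + p.2 * (-1) ≤ 0 := by
          refine subdiff_dir hp (-1, -1) 0 ?_
          filter_upwards [self_mem_nhdsWithin] with s hs
          have hs' : (0:ℝ) < s := hs
          simp only [Prod.smul_mk, Prod.mk_add_mk, smul_eq_mul, mul_zero, add_zero]
          have habs : |x + s * (-1)| = |x| + s := by
            rw [abs_of_neg (by linarith), abs_of_neg hx]; ring
          rw [habs]
          have : (-(|x| + s) + 1 - (t + s * (-1))) = -|x| + 1 - t := by ring
          rw [this]
        linarith [le_abs_self p.2]
      · -- x = 0, 1 - t < 0 : contradiction from subdiff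
        subst hx
        simp only [abs_zero, neg_zero, zero_add] at h0
        have h1 : p.1 * 0 + p.2 * 1 ≤ -1 := by
          refine subdiff_dir hp (0, 1) (-1) ?_
          filter_upwards [self_mem_nhdsWithin] with s hs
          have hs' : (0:ℝ) < s := hs
          simp only [Prod.smul_mk, Prod.mk_add_mk, smul_eq_mul, mul_zero, mul_one, add_zero,
            abs_zero, neg_zero, zero_add, mul_neg_one, abs_neg]
          rw [abs_of_pos hs', min_eq_right (by linarith : -s + 1 - t ≤ (0:ℝ)),
            min_eq_right (by linarith : (1:ℝ) - t ≤ 0)]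
          linarith
        have h2 : p.1 * 0 + p.2 * (-1) ≤ -1 := by
          refine subdiff_dir hp (0, -1) (-1) ?_
          filter_upwards [self_mem_nhdsWithin] with s hs
          have hs' : (0:ℝ) < s := hs
          simp only [Prod.smul_mk, Prod.mk_add_mk, smul_eq_mul, mul_zero, add_zero,
            abs_zero, neg_zero, zero_add, mul_neg_one, abs_neg]
          rw [abs_of_pos hs', min_eq_right (by linarith : -s + 1 - t ≤ (0:ℝ)),
            min_eq_right (by linarith : (1:ℝ) - t ≤ 0)]
          linarith
        linarith
      · -- x > 0 : direction (-1,1)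
        have h1 : p.1 * (-1) + p.2 * 1 ≤ 0 := by
          refine subdiff_dir hp (-1, 1) 0 ?_
          filter_upwards [self_mem_nhdsWithin] with s hs
          have hs' : (0:ℝ) < s := hs
          simp only [Prod.smul_mk, Prod.mk_add_mk, smul_eq_mul, mul_zero, mul_one, add_zero]
          have habs : |x + s| = |x| + s := by
            rw [abs_of_pos (by linarith), abs_of_pos hx]
          rw [habs]
          have : (-(|x| + s) + 1 - (t + s * (-1))) = -|x| + 1 - t := by ring
          rw [this]
        linarith [neg_abs_le p.2]
  · -- backward, superdiff : 0 ≤ p.1 + |p.2|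
    intro p hp
    show 0 ≤ p.1 + |p.2|
    have hC : min (0:ℝ) (1 - T) < 1 - t := lt_of_le_of_lt (min_le_right _ _) (by linarith [ht.2])
    rcases lt_trichotomy x 0 with hx | hx | hx
    · -- x < 0 : direction (1,1)
      have h1 : (0:ℝ) ≤ p.1 * 1 + p.2 * 1 := by
        refine superdiff_dir hp (1, 1) 0 ?_
        have hmem : Ioo (0:ℝ) (-x) ∈ 𝓝[>] (0:ℝ) :=
          Ioo_mem_nhdsGT_of_mem ⟨le_refl 0, by linarith⟩
        filter_upwards [hmem] with s hs
        simp only [Prod.smul_mk, Prod.mk_add_mk, smul_eq_mul, mul_one, mul_zero, add_zero]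
        have habs : |x + s| = |x| - s := by
          rw [abs_of_neg (by linarith [hs.2] : x + s < 0), abs_of_neg hx]; ring
        rw [habs]
        have : (-(|x| - s) + 1 - (t + s)) = -|x| + 1 - t := by ring
        rw [this]
      linarith [le_abs_self p.2]
    · -- x = 0 : direction (1,0)
      subst hx
      have h1 : (0:ℝ) ≤ p.1 * 1 + p.2 * 0 := by
        refine superdiff_dir hp (1, 0) 0 ?_
        have hmem : Ioo (0:ℝ) (1 - t - min 0 (1 - T)) ∈ 𝓝[>] (0:ℝ) :=
          Ioo_mem_nhdsGT_of_mem ⟨le_refl 0, by linarith⟩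
        filter_upwards [hmem] with s hs
        simp only [Prod.smul_mk, Prod.mk_add_mk, smul_eq_mul, mul_one, mul_zero, add_zero,
          abs_zero, neg_zero, zero_add]
        have e1 : min (min (0:ℝ) (1 - T)) (0 + 1 - t) = min 0 (1 - T) := by
          rw [min_eq_left]; linarith
        have e2 : min (min (0:ℝ) (1 - T)) (1 - (t + s)) = min 0 (1 - T) := by
          rw [min_eq_left]; linarith [hs.2]
        simp only [zero_add] at e1 ⊢
        rw [e1, e2]
      linarith [abs_nonneg p.2]
    · -- x > 0 : direction (1,-1)
      have h1 : (0:ℝ) ≤ p.1 * 1 + p.2 * (-1) := by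
        refine superdiff_dir hp (1, -1) 0 ?_
        have hmem : Ioo (0:ℝ) x ∈ 𝓝[>] (0:ℝ) :=
          Ioo_mem_nhdsGT_of_mem ⟨le_refl 0, hx⟩
        filter_upwards [hmem] with s hs
        simp only [Prod.smul_mk, Prod.mk_add_mk, smul_eq_mul, mul_one, mul_zero, add_zero]
        have habs : |x + s * (-1)| = |x| - s := by
          rw [abs_of_pos (by linarith [hs.2] : (0:ℝ) < x + s * (-1)), abs_of_pos hx]; ring
        rw [habs]
        have : (-(|x| - s) + 1 - (t + s)) = -|x| + 1 - t := by ring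
        rw [this]
      linarith [neg_abs_le p.2]
  · -- backward, subdiff : p.1 + |p.2| ≤ 0
    intro p hp
    show p.1 + |p.2| ≤ 0
    have key : ∀ e : ℝ, |e| = 1 → p.1 * 1 + p.2 * e ≤ 0 := by
      intro e he
      refine subdiff_dir hp (1, e) 0 ?_
      filter_upwards [self_mem_nhdsWithin] with s hs
      have hs' : (0:ℝ) < s := hs
      simp only [Prod.smul_mk, Prod.mk_add_mk, smul_eq_mul, mul_one, mul_zero, add_zero]
      have habs : |x| - s ≤ |x + s * e| := by
        have := abs_sub_abs_le_abs_sub x (x + s * e)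
        have h2 : |x - (x + s * e)| = s := by
          rw [show x - (x + s * e) = -(s * e) by ring, abs_neg, abs_mul, he,
            abs_of_pos hs']; ring
        linarith
      have h2 : (-|x + s * e| + 1 - (t + s * 1)) ≤ -|x| + 1 - t := by linarith
      have := min_le_min (le_refl (min (0:ℝ) (1 - T))) h2
      simpa using this
    have h1 := key 1 (by norm_num)
    have h2 := key (-1) (by norm_num)
    rcases abs_cases p.2 with ⟨h, _⟩ | ⟨h, _⟩ <;> linarith
  · -- w(T,·) = u(T,·)
    intro x
    have h : -|x| + 1 - T ≤ 1 - T := by linarith [abs_nonneg x]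
    rw [min_assoc, min_eq_right h]
  · -- T ≤ 1 : u = w
    intro hT1 t x ht
    rw [min_eq_left (by linarith : (0:ℝ) ≤ 1 - T)]
  · -- T > 1
    intro hT1
    refine ⟨?_, by norm_num, by intro h; linarith [sub_eq_zero.mp h]⟩
    simp only [abs_zero, neg_zero, zero_add, sub_zero]
    rw [min_eq_right (by linarith : (1:ℝ) - T ≤ 0), min_eq_left (by linarith)]
end

section
/- One-dimensional forward-backward equality: let G : ℝ ⇝ ℝ be Lipschitz with nonempty convex closed values, and let U, W : [0,T] × ℝ → ℝ be continuous functions such that (i) U and W are non-increasing along every solution of ẋ ∈ G(x): for any solution x(·) and t₁ < t₂, U(t₁,x(t₁)) ≥ U(t₂,x(t₂)) and W(t₁,x(t₁)) ≥ W(t₂,x(t₂)); (ii) for every (t₀,x₀) there is a solution x̄ with x̄(t₀) = x₀ along which U is constant on [0,t₀], and a solution x̃ with x̃(t₀) = x₀ along which W is constant on [t₀,T]. If U(0,·) = W(0,·) and U(T,·) = W(T,·), then U = W on [0,T] × ℝ. -/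
open Set MeasureTheory

/-- `x` is an (absolutely continuous) solution of the differential inclusion
`ẋ(s) ∈ G(x(s))` a.e. on `[0,T]`: there is an integrable `f` with
`x(t) = x(0) + ∫₀ᵗ f` on `[0,T]` and `f(s) ∈ G(x(s))` for a.e. `s ∈ [0,T]`. -/
def IsSolOn (G : ℝ → Set ℝ) (T : ℝ) (x : ℝ → ℝ) : Prop :=
  ∃ f : ℝ → ℝ, IntervalIntegrable f volume 0 T ∧
    (∀ t ∈ Set.Icc (0 : ℝ) T, x t = x 0 + ∫ s in (0 : ℝ)..t, f s) ∧
    (∀ᵐ s ∂volume.restrict (Set.Icc (0 : ℝ) T), f s ∈ G (x s))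

/-- A solution is continuous on `[0,T]`. -/
lemma IsSolOn.continuousOn {G : ℝ → Set ℝ} {T : ℝ} (hT : 0 ≤ T) {x : ℝ → ℝ}
    (hx : IsSolOn G T x) : ContinuousOn x (Icc 0 T) := by
  obtain ⟨f, hfi, hrep, -⟩ := hx
  have h1 : ContinuousOn (fun t => x 0 + ∫ s in (0:ℝ)..t, f s) (Icc 0 T) := by
    have := intervalIntegral.continuousOn_primitive_interval' hfi
      (Set.left_mem_uIcc (a := (0:ℝ)) (b := T))
    rw [Set.uIcc_of_le hT] at this
    exact continuousOn_const.add this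
  exact h1.congr hrep

/-- Theorem 5.3 (one-dimensional forward-backward equality). -/
theorem stmt_15 (G : ℝ → Set ℝ) (T : ℝ) (hT : 0 < T) (K : NNReal)
    (hLip : ∀ x y : ℝ, EMetric.hausdorffEdist (G x) (G y) ≤ K * edist x y)
    (hne : ∀ x, (G x).Nonempty) (hconv : ∀ x, Convex ℝ (G x))
    (hclosed : ∀ x, IsClosed (G x))
    (U W : ℝ → ℝ → ℝ)
    (hUcont : Continuous fun z : ℝ × ℝ => U z.1 z.2)
    (hWcont : Continuous fun z : ℝ × ℝ => W z.1 z.2)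
    -- (i) monotonicity along solutions
    (hUmono : ∀ x : ℝ → ℝ, IsSolOn G T x → ∀ t₁ ∈ Icc (0 : ℝ) T, ∀ t₂ ∈ Icc (0 : ℝ) T,
      t₁ < t₂ → U t₂ (x t₂) ≤ U t₁ (x t₁))
    (hWmono : ∀ x : ℝ → ℝ, IsSolOn G T x → ∀ t₁ ∈ Icc (0 : ℝ) T, ∀ t₂ ∈ Icc (0 : ℝ) T,
      t₁ < t₂ → W t₂ (x t₂) ≤ W t₁ (x t₁))
    -- (ii) constancy along optimal trajectories
    (hUopt : ∀ t₀ ∈ Icc (0 : ℝ) T, ∀ x₀ : ℝ, ∃ x : ℝ → ℝ, IsSolOn G T x ∧ x t₀ = x₀ ∧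
      ∀ t ∈ Icc (0 : ℝ) t₀, U t (x t) = U t₀ x₀)
    (hWopt : ∀ t₀ ∈ Icc (0 : ℝ) T, ∀ x₀ : ℝ, ∃ x : ℝ → ℝ, IsSolOn G T x ∧ x t₀ = x₀ ∧
      ∀ t ∈ Icc t₀ T, W t (x t) = W t₀ x₀)
    (h0 : ∀ x : ℝ, U 0 x = W 0 x) (hTend : ∀ x : ℝ, U T x = W T x) :
    ∀ t ∈ Icc (0 : ℝ) T, ∀ x : ℝ, U t x = W t x := by
  have hT0T : (0:ℝ) ∈ Icc (0:ℝ) T := ⟨le_refl 0, hT.le⟩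
  have hTTT : T ∈ Icc (0:ℝ) T := ⟨hT.le, le_refl T⟩
  -- Step 0: W ≤ U everywhere.
  have step0 : ∀ s ∈ Icc (0:ℝ) T, ∀ y : ℝ, W s y ≤ U s y := by
    intro s hs y
    obtain ⟨γ, hγsol, hγs, hγU⟩ := hUopt s hs y
    rcases eq_or_lt_of_le hs.1 with h | h
    · rw [← h]; exact (h0 y).ge
    · have h1 : W s (γ s) ≤ W 0 (γ 0) := hWmono γ hγsol 0 hT0T s hs h
      rw [hγs] at h1
      calc W s y ≤ W 0 (γ 0) := h1
        _ = U 0 (γ 0) := (h0 _).symm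
        _ = U s y := hγU 0 ⟨le_refl 0, hs.1⟩
  intro t ht x₀
  refine le_antisymm ?_ (step0 t ht x₀)
  by_contra hlt
  push_neg at hlt
  set α := U t x₀ with hα
  set β := W t x₀ with hβ
  set μ := (α + β) / 2 with hμ
  have hβμ : β < μ := by simp only [hμ]; linarith
  have hμα : μ < α := by simp only [hμ]; linarith
  obtain ⟨γ, hγsol, hγt, hγU⟩ := hUopt t ht x₀
  obtain ⟨δ, hδsol, hδt, hδW⟩ := hWopt t ht x₀
  obtain ⟨σ, hσsol, hσT, hσU⟩ := hUopt T hTTT (δ T)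
  have hUTδ : U T (δ T) = β := by
    rw [hTend]; exact hδW T ⟨ht.2, le_refl T⟩
  have hσUs : ∀ s ∈ Icc (0:ℝ) T, U s (σ s) = β := fun s hs => (hσU s hs).trans hUTδ
  have hγUs : ∀ s ∈ Icc (0:ℝ) t, U s (γ s) = α := hγU
  have hδWs : ∀ s ∈ Icc t T, W s (δ s) = β := hδW
  -- find w₀ between σ 0 and γ 0 with U 0 w₀ = μ
  have hU0cont : Continuous fun y : ℝ => U 0 y :=
    hUcont.comp (continuous_const.prodMk continuous_id)
  have hσ0 : U 0 (σ 0) = β := hσUs 0 hT0T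
  have hγ0 : U 0 (γ 0) = α := hγUs 0 ⟨le_refl 0, ht.1⟩
  have hμmem : μ ∈ uIcc (U 0 (σ 0)) (U 0 (γ 0)) := by
    rw [hσ0, hγ0]
    exact Set.mem_uIcc.2 (Or.inl ⟨hβμ.le, hμα.le⟩)
  obtain ⟨w₀, hw₀mem, hw₀0⟩ :=
    intermediate_value_uIcc (hU0cont.continuousOn) hμmem
  have hw₀ : U 0 w₀ = μ := hw₀0
  obtain ⟨ω, hωsol, hω0, hωW⟩ := hWopt 0 hT0T w₀
  have hωWs : ∀ s ∈ Icc (0:ℝ) T, W s (ω s) = μ := by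
    intro s hs
    rw [hωW s ⟨hs.1, hs.2⟩, ← h0]
    exact hw₀
  have hωUs : ∀ s ∈ Icc (0:ℝ) T, U s (ω s) = μ := by
    intro s hs
    refine le_antisymm ?_ ?_
    · rcases eq_or_lt_of_le hs.1 with h | h
      · rw [← h, hω0, hw₀]
      · have := hUmono ω hωsol 0 hT0T s hs h
        rw [hω0, hw₀] at this; exact this
    · rw [← hωWs s hs]; exact step0 s hs (ω s)
  -- non-meeting claims
  have hωσ : ∀ s ∈ Icc (0:ℝ) T, ω s ≠ σ s := by
    intro s hs h
    have h1 := hωUs s hs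
    rw [h, hσUs s hs] at h1
    linarith
  have hωγ : ∀ s ∈ Icc (0:ℝ) t, ω s ≠ γ s := by
    intro s hs h
    have hsT : s ∈ Icc (0:ℝ) T := ⟨hs.1, hs.2.trans ht.2⟩
    have h1 := hωUs s hsT
    rw [h, hγUs s hs] at h1
    linarith
  have hωδ : ∀ s ∈ Icc t T, ω s ≠ δ s := by
    intro s hs h
    have hsT : s ∈ Icc (0:ℝ) T := ⟨ht.1.trans hs.1, hs.2⟩
    have h1 := hωWs s hsT
    rw [h, hδWs s hs] at h1
    linarith
  -- w₀ strictly between σ 0 and γ 0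
  have hw₀σ : w₀ ≠ σ 0 := by intro h; rw [h, hσ0] at hw₀; linarith
  have hw₀γ : w₀ ≠ γ 0 := by intro h; rw [h, hγ0] at hw₀; linarith
  have hA0 : (w₀ - σ 0) * (w₀ - γ 0) < 0 := by
    rcases Set.mem_uIcc.1 hw₀mem with ⟨h1, h2⟩ | ⟨h1, h2⟩
    · have h1' : σ 0 < w₀ := lt_of_le_of_ne h1 (Ne.symm hw₀σ)
      have h2' : w₀ < γ 0 := lt_of_le_of_ne h2 hw₀γ
      exact mul_neg_of_pos_of_neg (by linarith) (by linarith)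
    · have h1' : γ 0 < w₀ := lt_of_le_of_ne h1 (Ne.symm hw₀γ)
      have h2' : w₀ < σ 0 := lt_of_le_of_ne h2 hw₀σ
      exact mul_neg_of_neg_of_pos (by linarith) (by linarith)
  -- continuity of solutions
  have hωc := hωsol.continuousOn hT.le
  have hσc := hσsol.continuousOn hT.le
  have hγc := hγsol.continuousOn hT.le
  have hδc := hδsol.continuousOn hT.le
  have hsub1 : Icc (0:ℝ) t ⊆ Icc (0:ℝ) T := Icc_subset_Icc_right ht.2
  have hsub2 : Icc t T ⊆ Icc (0:ℝ) T := Icc_subset_Icc_left ht.1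
  -- A on [0,t]
  set A : ℝ → ℝ := fun s => (ω s - σ s) * (ω s - γ s) with hA
  have hAcont : ContinuousOn A (Icc 0 t) :=
    (((hωc.mono hsub1).sub (hσc.mono hsub1)).mul
      ((hωc.mono hsub1).sub (hγc.mono hsub1)))
  have hAnz : ∀ s ∈ Icc (0:ℝ) t, A s ≠ 0 := by
    intro s hs
    exact mul_ne_zero (sub_ne_zero.2 (hωσ s (hsub1 hs))) (sub_ne_zero.2 (hωγ s hs))
  have hA0' : A 0 < 0 := by simpa [hA, hω0] using hA0
  have hAt : A t < 0 := by
    rcases lt_or_ge (A t) 0 with h | h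
    · exact h
    · exfalso
      have h0mem : (0:ℝ) ∈ Icc (A 0) (A t) := ⟨hA0'.le, h⟩
      obtain ⟨s, hs, hAs⟩ := intermediate_value_Icc ht.1 hAcont h0mem
      exact hAnz s hs hAs
  -- B on [t,T]
  set B : ℝ → ℝ := fun s => (ω s - σ s) * (ω s - δ s) with hB
  have hBcont : ContinuousOn B (Icc t T) :=
    (((hωc.mono hsub2).sub (hσc.mono hsub2)).mul
      ((hωc.mono hsub2).sub (hδc.mono hsub2)))
  have hBnz : ∀ s ∈ Icc t T, B s ≠ 0 := by
    intro s hs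
    exact mul_ne_zero (sub_ne_zero.2 (hωσ s (hsub2 hs))) (sub_ne_zero.2 (hωδ s hs))
  have hBt : B t < 0 := by
    have : B t = A t := by simp [hA, hB, hγt, hδt]
    rw [this]; exact hAt
  have hBT : 0 < B T := by
    have h1 : B T = (ω T - δ T) * (ω T - δ T) := by
      simp [hB, hσT]
    rw [h1]
    have h2 : ω T ≠ δ T := by
      have := hωσ T hTTT
      rwa [hσT] at this
    exact mul_self_pos.2 (sub_ne_zero.2 h2)
  obtain ⟨s, hs, hBs⟩ :=
    intermediate_value_Icc ht.2 hBcont ⟨hBt.le, hBT.le⟩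
  exact hBnz s hs hBs
end

section
/- If the Hamiltonian H : ℝⁿ × ℝⁿ → ℝ satisfies: p ↦ H(x,p) convex for each x, x ↦ H(x,p) concave for each p, and |H(x,p)| ≤ M(1+|x|)(1+|p|) for some M ≥ 0, then H satisfies the Lipschitz conditions |H(x,p) − H(x,q)| ≤ M'(1+|x|)|p−q| and |H(x,p) − H(y,p)| ≤ M'(1+|p|)|x−y| for all x, y, p, q and some constant M' ≥ 0. -/
open Set Filter Topology

lemma aux_lip {E : Type*} [NormedAddCommGroup E] [NormedSpace ℝ E]
    (f : E → ℝ) (C : ℝ)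
    (hconv : ConvexOn ℝ Set.univ f) (hgrow : ∀ p, |f p| ≤ C * (1 + ‖p‖)) :
    ∀ p q : E, f q - f p ≤ C * ‖q - p‖ := by
  have hC : 0 ≤ C := by
    have h0 := hgrow 0
    have := abs_nonneg (f 0)
    simp at h0
    linarith
  intro p q
  rcases eq_or_ne q p with h | h
  · simp [h]
  have hdpos : 0 < ‖q - p‖ := by
    rw [norm_pos_iff]; exact sub_ne_zero.mpr h
  set d := ‖q - p‖ with hd
  set A := 2 + ‖p‖ + ‖q‖ with hA
  have key : ∀ t : ℝ, 0 < t → f q - f p ≤ C * d * ((A + t) / (t + d)) := by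
    intro t ht
    have htd : 0 < t + d := by linarith
    set r : E := q + (t / d) • (q - p) with hr
    have hb0 : (0:ℝ) ≤ d / (t + d) := by positivity
    have ha0 : (0:ℝ) ≤ t / (t + d) := by positivity
    have hab : t / (t + d) + d / (t + d) = 1 := by field_simp
    have hcomb : (t / (t + d)) • p + (d / (t + d)) • r = q := by
      rw [hr]
      match_scalars <;> field_simp <;> ring
    have hcv := hconv.2 (Set.mem_univ p) (Set.mem_univ r) ha0 hb0 hab
    rw [hcomb] at hcv
    simp only [smul_eq_mul] at hcv
    have h1 : f q - f p ≤ (d / (t + d)) * (f r - f p) := by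
      have e : t / (t + d) = 1 - d / (t + d) := by linarith
      rw [e] at hcv
      ring_nf at hcv ⊢
      linarith
    have hrn : ‖r‖ ≤ ‖q‖ + t := by
      have : ‖(t / d) • (q - p)‖ = t := by
        rw [norm_smul, Real.norm_eq_abs, abs_of_pos (by positivity)]
        field_simp
        exact hd.symm
      calc ‖r‖ ≤ ‖q‖ + ‖(t / d) • (q - p)‖ := norm_add_le _ _
        _ = ‖q‖ + t := by rw [this]
    have hfr : f r ≤ C * (1 + ‖q‖ + t) := by
      have := (abs_le.mp (hgrow r)).2
      nlinarith
    have hfp : -f p ≤ C * (1 + ‖p‖) := by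
      have := (abs_le.mp (hgrow p)).1
      linarith
    have h2 : f r - f p ≤ C * (A + t) := by rw [hA]; nlinarith
    calc f q - f p ≤ (d / (t + d)) * (f r - f p) := h1
      _ ≤ (d / (t + d)) * (C * (A + t)) := by
          apply mul_le_mul_of_nonneg_left h2 hb0
      _ = C * d * ((A + t) / (t + d)) := by field_simp
  -- take the limit t → ∞
  have hlim : Tendsto (fun t : ℝ => C * d * ((A + t) / (t + d))) atTop (nhds (C * d)) := by
    have h1 : Tendsto (fun t : ℝ => (A - d) / (t + d)) atTop (nhds 0) :=
      tendsto_const_nhds.div_atTop (tendsto_atTop_add_const_right _ d tendsto_id)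
    have h2 : Tendsto (fun t : ℝ => C * d * (1 + (A - d) / (t + d))) atTop
        (nhds (C * d * (1 + 0))) :=
      (tendsto_const_nhds.add h1).const_mul _
    simp only [add_zero, mul_one] at h2
    refine h2.congr' ?_
    filter_upwards [eventually_gt_atTop 0] with t ht
    have htd : t + d ≠ 0 := by positivity
    have : 1 + (A - d) / (t + d) = (A + t) / (t + d) := by field_simp; ring
    rw [this]
  refine ge_of_tendsto hlim ?_
  filter_upwards [eventually_gt_atTop 0] with t ht using key t ht

/-- Lemma (B) ⟹ (A): a Hamiltonian convex in `p`, concave in `x`, with bilinear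
growth, satisfies the Lipschitz estimates of condition (A). -/
theorem stmt_17 {n : ℕ} (H : EuclideanSpace ℝ (Fin n) → EuclideanSpace ℝ (Fin n) → ℝ)
    (M : ℝ) (hM : 0 ≤ M)
    (hconv : ∀ x, ConvexOn ℝ univ (H x))
    (hconc : ∀ p, ConcaveOn ℝ univ fun x => H x p)
    (hgrow : ∀ x p, |H x p| ≤ M * (1 + ‖x‖) * (1 + ‖p‖)) :
    ∃ M' : ℝ, 0 ≤ M' ∧
      ∀ x y p q : EuclideanSpace ℝ (Fin n),
        |H x p - H x q| ≤ M' * (1 + ‖x‖) * ‖p - q‖ ∧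
        |H x p - H y p| ≤ M' * (1 + ‖p‖) * ‖x - y‖ := by
  refine ⟨M, hM, fun x y p q => ?_⟩
  constructor
  · have hg : ∀ r, |H x r| ≤ (M * (1 + ‖x‖)) * (1 + ‖r‖) := fun r => hgrow x r
    have h1 := aux_lip (H x) (M * (1 + ‖x‖)) (hconv x) hg p q
    have h2 := aux_lip (H x) (M * (1 + ‖x‖)) (hconv x) hg q p
    rw [abs_sub_le_iff]
    constructor
    · rw [show ‖p - q‖ = ‖q - p‖ from norm_sub_rev _ _] at *
      linarith
    · rw [← neg_sub q p, norm_neg] at *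
      linarith
  · have hg : ∀ z, |(fun z => -(H z p)) z| ≤ (M * (1 + ‖p‖)) * (1 + ‖z‖) := by
      intro z
      simp only [abs_neg]
      calc |H z p| ≤ M * (1 + ‖z‖) * (1 + ‖p‖) := hgrow z p
        _ = M * (1 + ‖p‖) * (1 + ‖z‖) := by ring
    have hcv : ConvexOn ℝ Set.univ (fun z => -(H z p)) := (hconc p).neg
    have h1 := aux_lip (fun z => -(H z p)) (M * (1 + ‖p‖)) hcv hg x y
    have h2 := aux_lip (fun z => -(H z p)) (M * (1 + ‖p‖)) hcv hg y x
    rw [abs_sub_le_iff]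
    constructor
    · rw [← neg_sub y x, norm_neg]
      linarith
    · rw [show ‖x - y‖ = ‖y - x‖ from norm_sub_rev _ _] at *
      linarith
end
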